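/- arXiv:1703.06624 — 12 statements merged into one kernel-verified Lean document; each statement's English description precedes it below -/
import Mathlib

section
/- For every real z > 1 and every integer k, the contour integral of μ^k·(μ² − 2zμ + 1)^{-1} over the unit circle {|μ| = 1} (traversed counterclockwise) equals −πi·ω(z)^{|k|}/√(z² − 1), where ω(z) = z − √(z² − 1). -/
open Complex Metric Set

private lemma myCircleIntegrable_zpow_div (m : ℤ) (a : ℂ) (ha : ‖a‖ ≠ 1) :
    CircleIntegrable (fun μ => μ ^ m / (μ - a)) 0 1 := by
  apply ContinuousOn.circleIntegrable zero_le_one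
  intro μ hμ
  have hμ1 : ‖μ‖ = 1 := by simpa using hμ
  have hμ0 : μ ≠ 0 := by intro h; rw [h] at hμ1; simp at hμ1
  have hμa : μ - a ≠ 0 := sub_ne_zero.2 (by intro h; rw [h] at hμ1; exact ha hμ1)
  exact ((continuousAt_zpow₀ μ m (Or.inl hμ0)).div
    ((continuousAt_id).sub continuousAt_const) hμa).continuousWithinAt

private lemma myCircleIntegrable_zpow (m : ℤ) :
    CircleIntegrable (fun μ => μ ^ m) 0 1 := by
  apply ContinuousOn.circleIntegrable zero_le_one
  intro μ hμ
  have hμ1 : ‖μ‖ = 1 := by simpa using hμ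
  have hμ0 : μ ≠ 0 := by intro h; rw [h] at hμ1; simp at hμ1
  exact (continuousAt_zpow₀ μ m (Or.inl hμ0)).continuousWithinAt

private lemma myIzpow (j : ℤ) (hj : j ≠ -1) : (∮ μ in C(0, 1), μ ^ j) = 0 := by
  simpa using circleIntegral.integral_sub_zpow_of_ne hj 0 0 1

private lemma myIinv : (∮ μ in C(0, 1), μ ^ (-1 : ℤ)) = 2 * Real.pi * I := by
  have := circleIntegral.integral_sub_inv_of_mem_ball (c := 0) (R := 1) (w := 0) (by simp)
  simpa [zpow_neg, zpow_one] using this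

/-- Cauchy formula: nonneg power, pole inside. -/
private lemma myJ_in (m : ℕ) (a : ℂ) (ha : ‖a‖ < 1) :
    (∮ μ in C(0, 1), μ ^ (m : ℤ) / (μ - a)) = 2 * Real.pi * I * a ^ (m : ℤ) := by
  have := circleIntegral_div_sub_of_differentiable_on_off_countable (s := (∅ : Set ℂ))
    Set.countable_empty (show a ∈ ball (0:ℂ) 1 by simpa [mem_ball_zero_iff] using ha)
    (f := fun μ => μ ^ m) (Continuous.continuousOn (by continuity))
    (fun z _ => differentiableAt_pow m)
  simpa [zpow_natCast] using this

/-- Nonneg power, pole outside: integral zero. -/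
private lemma myJ_out (m : ℕ) (a : ℂ) (ha : 1 < ‖a‖) :
    (∮ μ in C(0, 1), μ ^ (m : ℤ) / (μ - a)) = 0 := by
  have key : (∮ μ in C(0, 1), μ ^ m / (μ - a)) = 0 := by
    apply Complex.circleIntegral_eq_zero_of_differentiable_on_off_countable zero_le_one
      (s := (∅ : Set ℂ)) Set.countable_empty
    · intro μ hμ
      have hμa : μ - a ≠ 0 := sub_ne_zero.2 (by
        intro h; rw [h] at hμ
        simp only [mem_closedBall_zero_iff] at hμ; linarith)
      exact ((continuous_pow m).continuousAt.div
        ((continuousAt_id).sub continuousAt_const) hμa).continuousWithinAt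
    · intro μ hμ
      have hμa : μ - a ≠ 0 := sub_ne_zero.2 (by
        intro h; rw [h] at hμ
        simp only [Set.mem_diff, mem_ball_zero_iff] at hμ; linarith [hμ.1])
      exact (differentiableAt_pow m).div ((differentiableAt_id).sub
        (differentiableAt_const a)) hμa
  simpa [zpow_natCast] using key

/-- Recursion step. -/
private lemma myJ_rec (m : ℤ) (a : ℂ) (ha0 : a ≠ 0) (ha : ‖a‖ ≠ 1) :
    (∮ μ in C(0, 1), μ ^ (m - 1) / (μ - a)) =
      a⁻¹ * ((∮ μ in C(0, 1), μ ^ m / (μ - a)) - ∮ μ in C(0, 1), μ ^ (m - 1)) := by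
  rw [← circleIntegral.integral_sub
    (myCircleIntegrable_zpow_div m a ha) (myCircleIntegrable_zpow (m - 1)),
    ← circleIntegral.integral_const_mul]
  apply circleIntegral.integral_congr zero_le_one
  intro μ hμ
  have hμ1 : ‖μ‖ = 1 := by simpa using hμ
  have hμ0 : μ ≠ 0 := by intro h; rw [h] at hμ1; simp at hμ1
  have hμa : μ - a ≠ 0 := sub_ne_zero.2 (by intro h; rw [h] at hμ1; exact ha hμ1)
  have hz : μ ^ (m - 1) = μ ^ m * μ⁻¹ := by
    rw [zpow_sub_one₀ hμ0]
  simp only [hz]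
  field_simp
  ring

private lemma myJ_neg_in (n : ℕ) (a : ℂ) (ha0 : a ≠ 0) (ha : ‖a‖ < 1) :
    (∮ μ in C(0, 1), μ ^ (-(n : ℤ) - 1) / (μ - a)) = 0 := by
  induction n with
  | zero =>
      have h := myJ_rec 0 a ha0 (ne_of_lt ha)
      have h2 : (∮ μ in C(0, 1), μ ^ (0 : ℤ) / (μ - a)) = 2 * Real.pi * I * a ^ ((0:ℕ) : ℤ) := by
        simpa using myJ_in 0 a ha
      rw [show (-((0:ℕ):ℤ) - 1) = (0 : ℤ) - 1 by norm_num, h, h2,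
        show ((0:ℤ) - 1) = (-1 : ℤ) by norm_num, myIinv]
      simp
  | succ n ih =>
      have h := myJ_rec (-(n : ℤ) - 1) a ha0 (ne_of_lt ha)
      rw [show (-(((n:ℕ) + 1 : ℕ) : ℤ) - 1) = (-(n : ℤ) - 1) - 1 by push_cast; ring, h, ih,
        myIzpow (-(n : ℤ) - 1 - 1) (by omega)]
      simp

private lemma myJ_neg_out (n : ℕ) (a : ℂ) (ha : 1 < ‖a‖) :
    (∮ μ in C(0, 1), μ ^ (-(n : ℤ) - 1) / (μ - a)) =
      -(2 * Real.pi * I) * a ^ (-(n : ℤ) - 1) := by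
  have ha0 : a ≠ 0 := by intro h; rw [h] at ha; norm_num at ha
  have ha1 : ‖a‖ ≠ 1 := by linarith
  induction n with
  | zero =>
      have h := myJ_rec 0 a ha0 ha1
      have h2 : (∮ μ in C(0, 1), μ ^ (0 : ℤ) / (μ - a)) = 0 := by
        simpa using myJ_out 0 a ha
      rw [show (-((0:ℕ):ℤ) - 1) = (0 : ℤ) - 1 by norm_num, h, h2,
        show ((0:ℤ) - 1) = (-1 : ℤ) by norm_num, myIinv, zpow_neg_one]
      ring
  | succ n ih =>
      have h := myJ_rec (-(n : ℤ) - 1) a ha0 ha1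
      rw [show (-(((n:ℕ) + 1 : ℕ) : ℤ) - 1) = (-(n : ℤ) - 1) - 1 by push_cast; ring, h, ih,
        myIzpow (-(n : ℤ) - 1 - 1) (by omega), zpow_sub_one₀ ha0 (-(n : ℤ) - 1)]
      ring

/-- For every real `z > 1` and every integer `k`, the contour integral of
`μ ↦ μ^k / (μ² − 2zμ + 1)` over the unit circle equals
`−πi·ω(z)^{|k|}/√(z² − 1)` where `ω(z) = z − √(z² − 1)`. -/
theorem stmt0 (z : ℝ) (hz : 1 < z) (k : ℤ) :
    (∮ μ in C(0, 1), μ ^ k / (μ ^ 2 - 2 * (z : ℂ) * μ + 1)) =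
      -(Real.pi : ℂ) * Complex.I *
        ((z : ℂ) - (Real.sqrt (z ^ 2 - 1) : ℝ)) ^ (|k|) /
          ((Real.sqrt (z ^ 2 - 1) : ℝ) : ℂ) := by
  set s : ℝ := Real.sqrt (z ^ 2 - 1) with hs_def
  have hzpos : (0:ℝ) < z ^ 2 - 1 := by nlinarith
  have hs2 : s ^ 2 = z ^ 2 - 1 := Real.sq_sqrt hzpos.le
  have hs0 : 0 < s := Real.sqrt_pos.2 hzpos
  have hω0 : 0 < z - s := by nlinarith
  have hω1 : z - s < 1 := by nlinarith
  have hβ1 : 1 < z + s := by linarith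
  set a : ℂ := ((z - s : ℝ) : ℂ) with ha_def
  set b : ℂ := ((z + s : ℝ) : ℂ) with hb_def
  have habr : (z - s) * (z + s) = 1 := by nlinarith
  have hab : a * b = 1 := by
    rw [ha_def, hb_def, ← Complex.ofReal_mul, habr, Complex.ofReal_one]
  have hsum : a + b = 2 * (z : ℂ) := by rw [ha_def, hb_def]; push_cast; ring
  have hfac : ∀ μ : ℂ, μ ^ 2 - 2 * (z : ℂ) * μ + 1 = (μ - a) * (μ - b) := by
    intro μ; linear_combination μ * hsum - hab
  have hna : ‖a‖ < 1 := by
    rw [ha_def, Complex.norm_real, Real.norm_eq_abs, abs_of_pos hω0]; exact hω1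
  have hnb : 1 < ‖b‖ := by
    rw [hb_def, Complex.norm_real, Real.norm_eq_abs, abs_of_pos (by linarith)]; exact hβ1
  have ha0 : a ≠ 0 := by
    rw [ha_def]; exact_mod_cast hω0.ne'
  have hsC : ((s : ℝ) : ℂ) ≠ 0 := by exact_mod_cast hs0.ne'
  have hdiff : a - b = ((-2 * s : ℝ) : ℂ) := by rw [ha_def, hb_def]; push_cast; ring
  have hcalc : (∮ μ in C(0, 1), μ ^ k / (μ ^ 2 - 2 * (z : ℂ) * μ + 1)) =
      (a - b)⁻¹ * ((∮ μ in C(0, 1), μ ^ k / (μ - a)) - ∮ μ in C(0, 1), μ ^ k / (μ - b)) := by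
    rw [← circleIntegral.integral_sub (myCircleIntegrable_zpow_div k a (ne_of_lt hna))
      (myCircleIntegrable_zpow_div k b (by linarith)), ← circleIntegral.integral_const_mul]
    apply circleIntegral.integral_congr zero_le_one
    intro μ hμ
    have hμ1 : ‖μ‖ = 1 := by simpa using hμ
    have hμa : μ - a ≠ 0 := sub_ne_zero.2 fun h => by rw [h] at hμ1; exact (ne_of_lt hna) hμ1
    have hμb : μ - b ≠ 0 := sub_ne_zero.2 fun h => by rw [h] at hμ1; linarith
    have hba : a - b ≠ 0 := by
      rw [hdiff]
      exact_mod_cast (by nlinarith : (-2 : ℝ) * s ≠ 0)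
    show μ ^ k / (μ ^ 2 - 2 * (z : ℂ) * μ + 1) =
      (a - b)⁻¹ * (μ ^ k / (μ - a) - μ ^ k / (μ - b))
    rw [hfac μ]
    field_simp
    ring
  rw [hcalc]
  rcases le_or_gt 0 k with hk | hk
  · obtain ⟨m, rfl⟩ := Int.eq_ofNat_of_zero_le hk
    rw [myJ_in m a hna, myJ_out m b hnb, abs_of_nonneg hk, hdiff, ha_def]
    simp only [zpow_natCast]
    push_cast
    field_simp
    ring
  · set n : ℕ := (-k - 1).toNat with hn_def
    have hkn : k = -(n : ℤ) - 1 := by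
      have := Int.toNat_of_nonneg (by omega : (0:ℤ) ≤ -k - 1)
      omega
    have hb0 : b ≠ 0 := fun h => by rw [h] at hnb; norm_num at hnb
    have hbinv : b = a⁻¹ := by
      field_simp
      linear_combination hab
    have hbp : b ^ (-(n : ℤ) - 1) = a ^ (n + 1) := by
      rw [hbinv, inv_zpow, ← zpow_neg,
        show (-(-(n : ℤ) - 1)) = (((n + 1 : ℕ) : ℤ)) by push_cast; ring, zpow_natCast]
    have habs : ((z : ℂ) - (s : ℝ)) ^ (|(-(n : ℤ) - 1)|) = ((z : ℂ) - (s : ℝ)) ^ (n + 1) := by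
      rw [show (|(-(n : ℤ) - 1)|) = (((n + 1 : ℕ) : ℤ)) by
        rw [abs_of_nonpos (by omega)]; push_cast; ring, zpow_natCast]
    rw [hkn, myJ_neg_in n a ha0 hna, myJ_neg_out n b hnb, hbp, habs, hdiff, ha_def]
    push_cast
    field_simp
    ring
end

section
/- Fix a real z > 1 and set ω = z − √(z² − 1). For n, m ∈ ℕ define r_{n,m}(z) = (ω^{n+m+2} − ω^{|n−m|})/√(z² − 1). Then for every fixed m ∈ ℕ: (i) the sequence n ↦ r_{n,m}(z) is square-summable; (ii) (1/2)·r_{1,m}(z) − z·r_{0,m}(z) equals 1 if m = 0 and 0 otherwise, and for every n ≥ 1, (1/2)·(r_{n−1,m}(z) + r_{n+1,m}(z)) − z·r_{n,m}(z) equals 1 if n = m and 0 otherwise. In other words, r_{n,m}(z) is the kernel of the resolvent of the free half-line discrete Schrödinger operator H₊, given by (H₊f)_0 = f_1/2 and (H₊f)_n = (f_{n−1} + f_{n+1})/2 for n ≥ 1. -/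
/-!
Since `ω + ω⁻¹ = 2z`, both `k ↦ ω^k` and `k ↦ ω^|k|` solve the free equation
`(u (k-1) + u (k+1))/2 = z u k` on `ℤ`, the latter except at `k = 0`, where its defect is
`ω - z = -√(z² - 1)`. So `n ↦ ω^(n+m+2) - ω^|n-m|`, read on all of `ℤ`, solves the full-line
equation with source `√(z² - 1) e_m`; it vanishes at `n = -1` (an image charge), which is the
boundary condition hidden in `(H₊ f)_0 = f_1/2`. Square-summability holds because
`r_{n+m,m} = ω^n r_{m,m}` with `0 < ω < 1`.
-/

/-- The resolvent kernel `r_{n,m}(z) = (ω^{n+m+2} − ω^{|n−m|})/√(z² − 1)`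
of the free half-line discrete Schrödinger operator, with `ω = z − √(z² − 1)`. -/
noncomputable def resKernel (z : ℝ) (n m : ℕ) : ℝ :=
  ((z - Real.sqrt (z ^ 2 - 1)) ^ (n + m + 2) -
      (z - Real.sqrt (z ^ 2 - 1)) ^ ((n : ℤ) - (m : ℤ)).natAbs) /
    Real.sqrt (z ^ 2 - 1)

open Real

noncomputable def resOmega (z : ℝ) : ℝ := z - √(z ^ 2 - 1)

section Recurrence

variable {𝕜 : Type*} [Field 𝕜] {ω z : 𝕜}

theorem zpow_free_recurrence (hω : ω ≠ 0) (h : ω + ω⁻¹ = 2 * z) (k : ℤ) :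
    ω ^ (k - 1) + ω ^ (k + 1) = 2 * z * ω ^ k := by
  rw [zpow_sub_one₀ hω, zpow_add_one₀ hω]
  linear_combination ω ^ k * h

theorem zpow_abs_free_recurrence (hω : ω ≠ 0) (h : ω + ω⁻¹ = 2 * z) (k : ℤ) :
    ω ^ |k - 1| + ω ^ |k + 1| - 2 * z * ω ^ |k| = if k = 0 then 2 * (ω - z) else 0 := by
  rcases lt_trichotomy k 0 with hk | rfl | hk
  · have hrec := zpow_free_recurrence hω h (-k)
    rw [show -k - 1 = -(k + 1) by ring, show -k + 1 = -(k - 1) by ring] at hrec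
    rw [abs_of_neg (show k - 1 < 0 by omega), abs_of_nonpos (show k + 1 ≤ 0 by omega),
      abs_of_neg hk, if_neg hk.ne]
    linear_combination hrec
  · norm_num
    ring
  · rw [abs_of_nonneg (show 0 ≤ k - 1 by omega), abs_of_pos (show 0 < k + 1 by omega),
      abs_of_pos hk, if_neg hk.ne', zpow_free_recurrence hω h k, sub_self]

end Recurrence

section Omega

variable {z : ℝ}

theorem resOmega_mul_add_sqrt (hz : 1 ≤ z) : resOmega z * (z + √(z ^ 2 - 1)) = 1 := by
  have hs : √(z ^ 2 - 1) ^ 2 = z ^ 2 - 1 := sq_sqrt (by nlinarith)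
  unfold resOmega
  linear_combination -hs

theorem resOmega_pos (hz : 1 ≤ z) : 0 < resOmega z :=
  pos_of_mul_pos_left (by rw [resOmega_mul_add_sqrt hz]; exact one_pos) (by positivity)

theorem resOmega_lt_one (hz : 1 < z) : resOmega z < 1 := by
  have hs : 0 < √(z ^ 2 - 1) := sqrt_pos.mpr (by nlinarith)
  have := resOmega_mul_add_sqrt hz.le
  nlinarith [resOmega_pos hz.le]

theorem resOmega_add_inv (hz : 1 ≤ z) : resOmega z + (resOmega z)⁻¹ = 2 * z := by
  rw [inv_eq_of_mul_eq_one_right (resOmega_mul_add_sqrt hz), resOmega]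
  ring

end Omega

theorem resKernel_eq (z : ℝ) (n m : ℕ) :
    resKernel z n m =
      (resOmega z ^ (n + m + 2) - resOmega z ^ ((n : ℤ) - m).natAbs) / √(z ^ 2 - 1) :=
  rfl

theorem resKernel_add_self (z : ℝ) (n m : ℕ) :
    resKernel z (n + m) m = resOmega z ^ n * resKernel z m m := by
  have hexp : ((n + m : ℕ) - (m : ℤ)).natAbs = n := by omega
  rw [resKernel_eq, resKernel_eq, hexp, sub_self, Int.natAbs_zero]
  ring

noncomputable def resKernelInt (z : ℝ) (m : ℕ) (n : ℤ) : ℝ :=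
  (resOmega z ^ (n + m + 2) - resOmega z ^ |n - m|) / √(z ^ 2 - 1)

theorem resKernel_eq_resKernelInt (z : ℝ) (n m : ℕ) :
    resKernel z n m = resKernelInt z m n := by
  rw [resKernel_eq, resKernelInt, ← Int.natCast_natAbs, zpow_natCast]
  norm_cast

theorem resKernelInt_neg_one (z : ℝ) (m : ℕ) : resKernelInt z m (-1) = 0 := by
  rw [resKernelInt, show (-1 : ℤ) + m + 2 = m + 1 by ring, show (-1 : ℤ) - m = -(m + 1) by ring,
    abs_neg, abs_of_nonneg (by positivity), sub_self, zero_div]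

theorem resKernelInt_recurrence {z : ℝ} (hz : 1 < z) (m : ℕ) (n : ℤ) :
    (1 / 2) * (resKernelInt z m (n - 1) + resKernelInt z m (n + 1)) - z * resKernelInt z m n =
      if n = m then 1 else 0 := by
  have hω : resOmega z ≠ 0 := (resOmega_pos hz.le).ne'
  have hs : √(z ^ 2 - 1) ≠ 0 := (sqrt_pos.mpr (by nlinarith)).ne'
  have hfree := zpow_free_recurrence hω (resOmega_add_inv hz.le) (n + m + 2)
  have himage := zpow_abs_free_recurrence hω (resOmega_add_inv hz.le) (n - m)
  have hdefect : z - resOmega z = √(z ^ 2 - 1) := sub_sub_cancel _ _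
  simp only [sub_eq_zero] at himage
  simp only [resKernelInt, show n - 1 + m + 2 = n + m + 2 - 1 by ring,
    show n + 1 + m + 2 = n + m + 2 + 1 by ring, show n - 1 - m = n - m - 1 by ring,
    show n + 1 - m = n - m + 1 by ring]
  split_ifs at himage ⊢
  · field_simp
    linear_combination hfree - himage + 2 * hdefect
  · field_simp
    linear_combination hfree - himage

theorem summable_resKernel_sq {z : ℝ} (hz : 1 < z) (m : ℕ) :
    Summable fun n : ℕ => resKernel z n m ^ 2 := by
  have hω := resOmega_pos hz.le
  have hgeom : Summable fun n : ℕ => (resOmega z ^ 2) ^ n :=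
    summable_geometric_of_lt_one (by positivity) (pow_lt_one₀ hω.le (resOmega_lt_one hz) two_ne_zero)
  refine (summable_nat_add_iff m).mp ((hgeom.mul_left (resKernel z m m ^ 2)).congr fun n => ?_)
  rw [resKernel_add_self]
  ring

/-- For fixed `m`, the sequence `n ↦ r_{n,m}(z)` is square-summable and satisfies
`(H₊ − z) r_{·,m} = e_m` componentwise, i.e. it is the kernel of the resolvent
of the free half-line discrete Schrödinger operator. -/
theorem stmt1 (z : ℝ) (hz : 1 < z) (m : ℕ) :
    Summable (fun n : ℕ => (resKernel z n m) ^ 2) ∧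
    ((1 / 2) * resKernel z 1 m - z * resKernel z 0 m =
      if m = 0 then 1 else 0) ∧
    (∀ n : ℕ, 1 ≤ n →
      (1 / 2) * (resKernel z (n - 1) m + resKernel z (n + 1) m) - z * resKernel z n m =
        if n = m then 1 else 0) := by
  refine ⟨summable_resKernel_sq hz m, ?_, fun n hn => ?_⟩
  · have h := resKernelInt_recurrence hz m 0
    rw [zero_sub, resKernelInt_neg_one, zero_add, zero_add] at h
    simpa [resKernel_eq_resKernelInt, eq_comm] using h
  · have h := resKernelInt_recurrence hz m n
    rw [resKernel_eq_resKernelInt, resKernel_eq_resKernelInt, resKernel_eq_resKernelInt]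
    push_cast [Nat.cast_sub hn]
    simpa using h
end

section
/- Let a > 0 and let z > 1 be real. Set ω(z) = z − √(z² − 1) and γ_±(z;a) = a/2 ± ((a² − 2)/(2a))·z/√(z² − 1). Then for every n ≥ 1, Ch_n(z;a) = γ₊(z;a)·ω(z)^n + γ₋(z;a)·ω(z)^{−n}. -/
/-- The generalized Chebyshev polynomials `Ch_n(x; a)`:
`Ch_0 = 1`, `Ch_1 = 2x/a`, `Ch_2 = 2x·Ch_1 − a`, and
`Ch_{n+1} = 2x·Ch_n − Ch_{n−1}` for `n ≥ 2`. -/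
noncomputable def Ch (a x : ℝ) : ℕ → ℝ
  | 0 => 1
  | 1 => 2 * x / a
  | 2 => 2 * x * (2 * x / a) - a
  | n + 3 => 2 * x * Ch a x (n + 2) - Ch a x (n + 1)

/-- Any sequence of the form `γ₊ω^n + γ₋ω^{-n}` with `ω = z - s`, `s² = z² - 1`,
satisfies the Chebyshev recurrence. -/
lemma chebStep (z s γp γm : ℝ) (hs2 : s ^ 2 = z ^ 2 - 1) (k : ℕ) :
    2 * z * (γp * (z - s) ^ (k + 2) + γm * (z + s) ^ (k + 2)) -
      (γp * (z - s) ^ (k + 1) + γm * (z + s) ^ (k + 1)) =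
    γp * (z - s) ^ (k + 3) + γm * (z + s) ^ (k + 3) := by
  linear_combination (-(γp * (z - s) ^ (k + 1) + γm * (z + s) ^ (k + 1))) * hs2

/-- For `a > 0`, `z > 1` real and `n ≥ 1`,
`Ch_n(z;a) = γ₊(z;a)·ω(z)^n + γ₋(z;a)·ω(z)^{−n}` where
`ω(z) = z − √(z² − 1)` and `γ_±(z;a) = a/2 ± ((a² − 2)/(2a))·z/√(z² − 1)`. -/
theorem stmt2 (a z : ℝ) (ha : 0 < a) (hz : 1 < z) (n : ℕ) (hn : 1 ≤ n) :
    Ch a z n =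
      (a / 2 + (a ^ 2 - 2) / (2 * a) * z / Real.sqrt (z ^ 2 - 1)) *
          (z - Real.sqrt (z ^ 2 - 1)) ^ (n : ℤ) +
        (a / 2 - (a ^ 2 - 2) / (2 * a) * z / Real.sqrt (z ^ 2 - 1)) *
          (z - Real.sqrt (z ^ 2 - 1)) ^ (-(n : ℤ)) := by
  set s := Real.sqrt (z ^ 2 - 1) with hsdef
  have hz2 : (0:ℝ) < z ^ 2 - 1 := by nlinarith
  have hs2 : s ^ 2 = z ^ 2 - 1 := Real.sq_sqrt hz2.le
  have hs0 : 0 < s := Real.sqrt_pos.mpr hz2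
  have hmul : (z - s) * (z + s) = 1 := by nlinarith
  have hωinv : (z - s)⁻¹ = z + s := inv_eq_of_mul_eq_one_right hmul
  rw [zpow_neg, zpow_natCast, ← inv_pow, hωinv]
  have ha0 : a ≠ 0 := ha.ne'
  have hs0' : s ≠ 0 := hs0.ne'
  set c := (a ^ 2 - 2) / (2 * a) * z / s with hcdef
  have hc : 2 * a * (c * s) = (a ^ 2 - 2) * z := by
    rw [hcdef]; field_simp
  clear_value c
  have key : ∀ m : ℕ,
      Ch a z (m + 1) = (a / 2 + c) * (z - s) ^ (m + 1) + (a / 2 - c) * (z + s) ^ (m + 1) ∧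
      Ch a z (m + 2) = (a / 2 + c) * (z - s) ^ (m + 2) + (a / 2 - c) * (z + s) ^ (m + 2) := by
    intro m
    induction m with
    | zero =>
      constructor
      · show 2 * z / a = _
        rw [div_eq_iff ha0]
        linear_combination hc
      · show 2 * z * (2 * z / a) - a = _
        refine mul_left_cancel₀ ha0 ?_
        have hclear : a * (2 * z * (2 * z / a) - a) = 4 * z ^ 2 - a ^ 2 := by
          field_simp; ring
        rw [hclear]
        linear_combination (-a ^ 2) * hs2 + 2 * z * hc
    | succ k ih =>
      refine ⟨ih.2, ?_⟩
      show 2 * z * Ch a z (k + 2) - Ch a z (k + 1) = _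
      rw [ih.1, ih.2]
      exact chebStep z s _ _ hs2 k
  obtain ⟨m, rfl⟩ : ∃ m, n = m + 1 := ⟨n - 1, by omega⟩
  exact (key m).1
end

section
/- Let a > 0 and θ ∈ (0, π). Set κ(θ;a) = √(a⁴ + 4(1 − a²)cos²θ)/(a·sin θ) and δ(θ;a) = arctan(((2 − a²)/a²)·(cos θ/sin θ)). Then for every n ≥ 1, Ch_n(cos θ; a) = κ(θ;a)·cos(nθ − δ(θ;a)). -/
/-- For `a > 0`, `θ ∈ (0, π)` and `n ≥ 1`:
`Ch_n(cos θ; a) = κ(θ;a)·cos(nθ − δ(θ;a))` where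
`κ(θ;a) = √(a⁴ + 4(1 − a²)cos²θ)/(a·sin θ)` and
`δ(θ;a) = arctan(((2 − a²)/a²)·(cos θ/sin θ))`. -/
theorem stmt4 (a θ : ℝ) (ha : 0 < a) (hθ : θ ∈ Set.Ioo 0 Real.pi)
    (n : ℕ) (hn : 1 ≤ n) :
    Ch a (Real.cos θ) n =
      Real.sqrt (a ^ 4 + 4 * (1 - a ^ 2) * Real.cos θ ^ 2) / (a * Real.sin θ) *
        Real.cos ((n : ℝ) * θ -
          Real.arctan ((2 - a ^ 2) / a ^ 2 * (Real.cos θ / Real.sin θ))) := by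
  obtain ⟨hθ0, hθπ⟩ := hθ
  have hs : 0 < Real.sin θ := Real.sin_pos_of_pos_of_lt_pi hθ0 hθπ
  have ha' : a ≠ 0 := ha.ne'
  have hs' : Real.sin θ ≠ 0 := hs.ne'
  have hsq : Real.sin θ ^ 2 = 1 - Real.cos θ ^ 2 := by
    have := Real.sin_sq_add_cos_sq θ; linarith
  set c := Real.cos θ with hc
  set s := Real.sin θ with hsdef
  set g : ℕ → ℝ := fun m =>
    a * Real.cos (m * θ) + (2 - a ^ 2) / a * (c / s) * Real.sin (m * θ) with hg
  -- LHS equals g n for n ≥ 1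
  have key : ∀ m : ℕ, Ch a c (m + 1) = g (m + 1) ∧ Ch a c (m + 2) = g (m + 2) := by
    intro m
    induction m with
    | zero =>
      constructor
      · show Ch a c 1 = g 1
        simp only [Ch, hg, Nat.cast_one, one_mul]
        field_simp
        ring
      · show Ch a c 2 = g 2
        simp only [Ch, hg, Nat.cast_ofNat]
        rw [Real.cos_two_mul, Real.sin_two_mul]
        field_simp
        ring
    | succ k ih =>
      refine ⟨ih.2, ?_⟩
      show Ch a c (k + 3) = g (k + 3)
      have hrec : Ch a c (k + 3) = 2 * c * Ch a c (k + 2) - Ch a c (k + 1) := rfl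
      rw [hrec, ih.1, ih.2, hg]
      simp only
      have e1 : ((k + 3 : ℕ) : ℝ) * θ = ((k + 2 : ℕ) : ℝ) * θ + θ := by push_cast; ring
      have e2 : ((k + 1 : ℕ) : ℝ) * θ = ((k + 2 : ℕ) : ℝ) * θ - θ := by push_cast; ring
      rw [e1, e2, Real.cos_add, Real.sin_add, Real.cos_sub, Real.sin_sub]
      field_simp
      ring
  have hLHS : Ch a c n = g n := by
    obtain ⟨m, rfl⟩ := Nat.exists_eq_add_of_le hn
    simpa [Nat.add_comm] using (key m).1
  -- RHS equals g n
  set t : ℝ := (2 - a ^ 2) / a ^ 2 * (c / s) with ht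
  have h1t : (0:ℝ) < 1 + t ^ 2 := by positivity
  have hN : a ^ 4 + 4 * (1 - a ^ 2) * c ^ 2 = (a ^ 2 * s) ^ 2 * (1 + t ^ 2) := by
    rw [ht]
    field_simp
    linear_combination (-(a^4)) * hsq
  have hsqrt : Real.sqrt (a ^ 4 + 4 * (1 - a ^ 2) * c ^ 2)
      = a ^ 2 * s * Real.sqrt (1 + t ^ 2) := by
    rw [hN, Real.sqrt_mul (by positivity), Real.sqrt_sq (by positivity)]
  have hst : Real.sqrt (1 + t ^ 2) ≠ 0 := by positivity
  have hss : Real.sqrt (1 + t ^ 2) * Real.sqrt (1 + t ^ 2) = 1 + t ^ 2 :=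
    Real.mul_self_sqrt h1t.le
  rw [hLHS, hsqrt, Real.cos_sub, Real.cos_arctan, Real.sin_arctan, hg]
  simp only
  rw [ht]
  field_simp
end

section
/- Let a > 0 and let z > 1 be real. With ω = ω(z) = z − √(z² − 1) and α = (a − 1)/2, the 2×2 determinant det [[1 + α·r_{1,0}, α·r_{0,0}], [α·r_{1,1}, 1 + α·r_{0,1}]], where r_{0,0} = −2ω, r_{1,0} = r_{0,1} = −2ω², r_{1,1} = −4zω², equals 1 + (1 − a²)·ω². Equivalently, (1 − (a − 1)ω²)² − 2(a − 1)²·z·ω³ = 1 + (1 − a²)·ω². -/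
/-- For `a > 0` and real `z > 1`, with `ω = z − √(z² − 1)` and `α = (a − 1)/2`, the
perturbation determinant `det [[1 + α r_{1,0}, α r_{0,0}], [α r_{1,1}, 1 + α r_{0,1}]]`
(with `r_{0,0} = −2ω`, `r_{1,0} = r_{0,1} = −2ω²`, `r_{1,1} = −4zω²`) equals
`1 + (1 − a²)ω²`; equivalently `(1 − (a−1)ω²)² − 2(a−1)²zω³ = 1 + (1 − a²)ω²`. -/
theorem stmt5 (a z : ℝ) (ha : 0 < a) (hz : 1 < z) :
    (Matrix.det
        !![1 + (a - 1) / 2 * (-2 * (z - Real.sqrt (z ^ 2 - 1)) ^ 2),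
            (a - 1) / 2 * (-2 * (z - Real.sqrt (z ^ 2 - 1)));
          (a - 1) / 2 * (-4 * z * (z - Real.sqrt (z ^ 2 - 1)) ^ 2),
            1 + (a - 1) / 2 * (-2 * (z - Real.sqrt (z ^ 2 - 1)) ^ 2)] =
      1 + (1 - a ^ 2) * (z - Real.sqrt (z ^ 2 - 1)) ^ 2) ∧
    ((1 - (a - 1) * (z - Real.sqrt (z ^ 2 - 1)) ^ 2) ^ 2 -
        2 * (a - 1) ^ 2 * z * (z - Real.sqrt (z ^ 2 - 1)) ^ 3 =
      1 + (1 - a ^ 2) * (z - Real.sqrt (z ^ 2 - 1)) ^ 2) := by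
  have hs : Real.sqrt (z ^ 2 - 1) ^ 2 = z ^ 2 - 1 :=
    Real.sq_sqrt (by nlinarith)
  constructor
  · rw [Matrix.det_fin_two_of]
    linear_combination ((a-1)^2 * (z - Real.sqrt (z^2-1))^2) * hs
  · linear_combination ((a-1)^2 * (z - Real.sqrt (z^2-1))^2) * hs
end

section
/- Let a > 0 and let λ > 1 be real. Then 1 + (1 − a²)·(λ − √(λ² − 1))² = 0 holds if and only if a > √2 and λ = a²/(2√(a² − 1)). -/
/-- For `a > 0` and real `l > 1`, `1 + (1 − a²)(l − √(l² − 1))² = 0` iff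
`a > √2` and `l = a²/(2√(a² − 1))`. -/
theorem stmt6 (a l : ℝ) (ha : 0 < a) (hl : 1 < l) :
    1 + (1 - a ^ 2) * (l - Real.sqrt (l ^ 2 - 1)) ^ 2 = 0 ↔
      Real.sqrt 2 < a ∧ l = a ^ 2 / (2 * Real.sqrt (a ^ 2 - 1)) := by
  have h1 : (0:ℝ) ≤ l ^ 2 - 1 := by nlinarith
  set s := Real.sqrt (l ^ 2 - 1) with hs
  have hs2 : s ^ 2 = l ^ 2 - 1 := Real.sq_sqrt h1
  have hs0 : 0 ≤ s := Real.sqrt_nonneg _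
  have hsl : s < l := by nlinarith
  constructor
  · intro h
    have hw : 0 < l - s := by linarith
    have hls : 0 < l + s := by linarith
    have hprod : (l - s) * (l + s) = 1 := by nlinarith
    have h2 : (a ^ 2 - 1) * (l - s) ^ 2 = 1 := by nlinarith
    have ha2 : a ^ 2 - 1 = (l + s) ^ 2 := by
      calc a ^ 2 - 1 = (a ^ 2 - 1) * ((l - s) * (l + s)) ^ 2 := by rw [hprod]; ring
        _ = ((a ^ 2 - 1) * (l - s) ^ 2) * (l + s) ^ 2 := by ring
        _ = (l + s) ^ 2 := by rw [h2]; ring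
    have hls1 : 1 < l + s := by linarith
    refine ⟨(Real.sqrt_lt' ha).2 (by nlinarith), ?_⟩
    have hsq : Real.sqrt (a ^ 2 - 1) = l + s := by
      rw [ha2, Real.sqrt_sq hls.le]
    rw [hsq, eq_div_iff (by positivity)]
    nlinarith
  · rintro ⟨ha2, hleq⟩
    have ha2' : 2 < a ^ 2 := (Real.sqrt_lt' ha).1 ha2
    set t := Real.sqrt (a ^ 2 - 1) with htdef
    have ht2 : t ^ 2 = a ^ 2 - 1 := Real.sq_sqrt (by linarith)
    have ht0 : 0 < t := Real.sqrt_pos.2 (by linarith)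
    have hseq : s = (a ^ 2 - 2) / (2 * t) := by
      have hv : l ^ 2 - 1 = ((a ^ 2 - 2) / (2 * t)) ^ 2 := by
        rw [hleq]; field_simp; nlinarith
      rw [hs, hv, Real.sqrt_sq (div_nonneg (by linarith) (by positivity))]
    rw [hleq, hseq]
    field_simp
    nlinarith
end

section
/- Let a > 0 and let z > 1 be real with (a² − 2)·z − a²·√(z² − 1) ≠ 0. Set ω = z − √(z² − 1), u_0 = 2/((a² − 2)·z − a²·√(z² − 1)) and u_n = a·u_0·ω^n for n ≥ 1. Then: (i) (a/2)·u_1 − z·u_0 = 1; (ii) (1/2)·(a·u_0 + u_2) − z·u_1 = 0; (iii) for every n ≥ 2, (1/2)·(u_{n−1} + u_{n+1}) − z·u_n = 0; (iv) the sequence (u_n) is square-summable; and (v) u_0 = 2ω/((a² − 1)ω² − 1). -/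
/-!
`ω = z - √(z² - 1)` is the root in `(0, 1)` of `ω² - 2zω + 1 = 0`, so every geometric sequence
`ω^n` satisfies the free recurrence `(ω^(n-1) + ω^(n+1)) / 2 = z ω^n` and is square-summable.
The boundary rows of `H_a - z` then reduce to `a² ω - 2z = D`, with
`D = (a² - 2) z - a² √(z² - 1)`, and multiplying this by `ω` and using the quadratic again gives
`D ω = (a² - 1) ω² - 1`, which is the second formula for `u₀`.
-/

open Real

noncomputable def jacobiOmega (z : ℝ) : ℝ := z - √(z ^ 2 - 1)

lemma jacobiOmega_sq_sub_two_mul_add_one {z : ℝ} (hz : 1 ≤ z ^ 2) :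
    jacobiOmega z ^ 2 - 2 * z * jacobiOmega z + 1 = 0 := by
  have hs : √(z ^ 2 - 1) ^ 2 = z ^ 2 - 1 := sq_sqrt (by linarith)
  unfold jacobiOmega
  linear_combination hs

lemma jacobiOmega_pos {z : ℝ} (hz : 1 ≤ z) : 0 < jacobiOmega z := by
  have : √(z ^ 2 - 1) < z := (sqrt_lt' (by linarith)).2 (by linarith)
  unfold jacobiOmega
  linarith

lemma jacobiOmega_lt_one {z : ℝ} (hz : 1 < z) : jacobiOmega z < 1 := by
  have : z - 1 < √(z ^ 2 - 1) := (lt_sqrt (by linarith)).2 (by nlinarith)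
  unfold jacobiOmega
  linarith

lemma pow_add_pow_add_two_of_sq_sub_two_mul_add_one {x z : ℝ}
    (h : x ^ 2 - 2 * z * x + 1 = 0) (n : ℕ) :
    x ^ n + x ^ (n + 2) = 2 * z * x ^ (n + 1) := by
  linear_combination x ^ n * h

lemma summable_sq_mul_pow {x : ℝ} (hx : |x| < 1) (c : ℝ) :
    Summable fun n : ℕ => (c * x ^ n) ^ 2 := by
  have hgeom := summable_geometric_of_lt_one (sq_nonneg x) ((sq_lt_one_iff_abs_lt_one x).2 hx)
  exact (hgeom.mul_left (c ^ 2)).congr fun n => by ring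

theorem stmt7_general (a z : ℝ) (hz : 1 < z)
    (hD : (a ^ 2 - 2) * z - a ^ 2 * Real.sqrt (z ^ 2 - 1) ≠ 0) :
    let ω : ℝ := z - Real.sqrt (z ^ 2 - 1)
    let u : ℕ → ℝ := fun n =>
      if n = 0 then 2 / ((a ^ 2 - 2) * z - a ^ 2 * Real.sqrt (z ^ 2 - 1))
      else a * (2 / ((a ^ 2 - 2) * z - a ^ 2 * Real.sqrt (z ^ 2 - 1))) * ω ^ n
    (a / 2) * u 1 - z * u 0 = 1 ∧
    (1 / 2) * (a * u 0 + u 2) - z * u 1 = 0 ∧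
    (∀ n : ℕ, 2 ≤ n → (1 / 2) * (u (n - 1) + u (n + 1)) - z * u n = 0) ∧
    Summable (fun n : ℕ => (u n) ^ 2) ∧
    u 0 = 2 * ω / ((a ^ 2 - 1) * ω ^ 2 - 1) := by
  intro ω u
  set D := (a ^ 2 - 2) * z - a ^ 2 * √(z ^ 2 - 1)
  have hquad : ω ^ 2 - 2 * z * ω + 1 = 0 :=
    jacobiOmega_sq_sub_two_mul_add_one (by nlinarith)
  have hω : 0 < ω := jacobiOmega_pos hz.le
  have hrec := pow_add_pow_add_two_of_sq_sub_two_mul_add_one hquad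
  have hD_eq : a ^ 2 * ω - 2 * z = D := by ring
  have hDω : D * ω = (a ^ 2 - 1) * ω ^ 2 - 1 := by
    linear_combination ω * hD_eq.symm + hquad
  have hu0 : u 0 = 2 / D := if_pos rfl
  have hu : ∀ n, u (n + 1) = a * (2 / D) * ω ^ (n + 1) := fun n => if_neg n.succ_ne_zero
  refine ⟨?_, ?_, ?_, ?_, ?_⟩
  · rw [hu 0, hu0]
    field_simp
    linear_combination hD_eq
  · rw [hu 1, hu 0, hu0]
    linear_combination a / D * hrec 0
  · intro n hn
    obtain ⟨m, rfl⟩ := Nat.exists_eq_add_of_le' hn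
    rw [show m + 2 - 1 = m + 1 by omega, hu, hu, hu]
    linear_combination a / D * hrec (m + 1)
  · rw [← summable_nat_add_iff 1]
    simpa only [hu, pow_succ', ← mul_assoc] using
      summable_sq_mul_pow (by rw [abs_of_pos hω]; exact jacobiOmega_lt_one hz) (a * (2 / D) * ω)
  · rw [hu0, ← hDω, mul_comm D, ← div_div, mul_div_cancel_right₀ _ hω.ne']

/-- For `a > 0`, real `z > 1` with `(a² − 2)z − a²√(z² − 1) ≠ 0`, the sequence
`u_0 = 2/((a² − 2)z − a²√(z² − 1))`, `u_n = a·u_0·ω^n` (`n ≥ 1`, `ω = z − √(z² − 1)`)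
is square-summable, solves `(H_a − z)u = e_0` componentwise, and
`u_0 = 2ω/((a² − 1)ω² − 1)`. -/
theorem stmt7 (a z : ℝ) (ha : 0 < a) (hz : 1 < z)
    (hD : (a ^ 2 - 2) * z - a ^ 2 * Real.sqrt (z ^ 2 - 1) ≠ 0) :
    let ω : ℝ := z - Real.sqrt (z ^ 2 - 1)
    let u : ℕ → ℝ := fun n =>
      if n = 0 then 2 / ((a ^ 2 - 2) * z - a ^ 2 * Real.sqrt (z ^ 2 - 1))
      else a * (2 / ((a ^ 2 - 2) * z - a ^ 2 * Real.sqrt (z ^ 2 - 1))) * ω ^ n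
    (a / 2) * u 1 - z * u 0 = 1 ∧
    (1 / 2) * (a * u 0 + u 2) - z * u 1 = 0 ∧
    (∀ n : ℕ, 2 ≤ n → (1 / 2) * (u (n - 1) + u (n + 1)) - z * u n = 0) ∧
    Summable (fun n : ℕ => (u n) ^ 2) ∧
    u 0 = 2 * ω / ((a ^ 2 - 1) * ω ^ 2 - 1) :=
  stmt7_general a z hz hD
end

section
/- Let z > 1 be real, set ω = z − √(z² − 1), and let U_n denote the Chebyshev polynomial of the second kind of degree n. Then for all n, m ∈ ℕ, ∫_{−1}^{1} U_n(λ)·U_m(λ)·√(1 − λ²)/(λ − z) dλ = π·(ω^{n+m+2} − ω^{|n−m|})/(2√(z² − 1)). -/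
/-!
Substituting `x = cos θ` turns `U_n(x) √(1 - x²)` into `sin ((n + 1) θ)`, and the product of two
such sines is `(cos ((n - m) θ) - cos ((n + m + 2) θ)) / 2`. Everything therefore reduces to
`I_k = ∫₀^π cos (k θ) / (cos θ - z) dθ = -π ω^k / √(z² - 1)`. The case `k = 0` is the integral of
the Poisson kernel at `ω`, and `I_k` obeys the recurrence `I_{k+2} = 2z I_{k+1} - I_k` of the
powers of `ω` (a root of `ω² - 2zω + 1`), because
`cos ((k + 2) θ) = 2 (cos θ - z) cos ((k + 1) θ) + 2z cos ((k + 1) θ) - cos (k θ)` and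
`cos ((k + 1) θ)` integrates to zero over `[0, π]`.
-/

open Real intervalIntegral Set

section PoissonKernel

variable {w : ℝ}

theorem one_sub_mul_cos_ne_zero (hw : |w| < 1) (t : ℝ) : 1 - w * cos t ≠ 0 := by
  have : |w * cos t| < 1 := by
    rw [abs_mul]
    exact (mul_le_of_le_one_right (abs_nonneg w) (abs_cos_le_one t)).trans_lt hw
  linarith [le_abs_self (w * cos t)]

theorem one_sub_two_mul_mul_cos_add_sq_eq (w t : ℝ) :
    1 - 2 * w * cos t + w ^ 2 = (1 - w * cos t) ^ 2 + (w * sin t) ^ 2 := by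
  linear_combination -w ^ 2 * sin_sq_add_cos_sq t

theorem one_sub_two_mul_mul_cos_add_sq_pos (hw : |w| < 1) (t : ℝ) :
    0 < 1 - 2 * w * cos t + w ^ 2 := by
  have := one_sub_mul_cos_ne_zero hw t
  rw [one_sub_two_mul_mul_cos_add_sq_eq]
  positivity

/-- A primitive of the Poisson kernel that, unlike `2 arctan ((1 + w) / (1 - w) * tan (t / 2))`,
is smooth on all of `ℝ`. -/
theorem hasDerivAt_add_two_mul_arctan (hw : |w| < 1) (t : ℝ) :
    HasDerivAt (fun t => t + 2 * arctan (w * sin t / (1 - w * cos t)))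
      ((1 - w ^ 2) / (1 - 2 * w * cos t + w ^ 2)) t := by
  have hden := one_sub_mul_cos_ne_zero hw t
  have hpos := one_sub_two_mul_mul_cos_add_sq_pos hw t
  refine ((hasDerivAt_id t).add
    ((((hasDerivAt_sin t).const_mul w).div
      (((hasDerivAt_cos t).const_mul w).const_sub 1) hden).arctan.const_mul 2)).congr_deriv ?_
  rw [one_sub_two_mul_mul_cos_add_sq_eq] at hpos ⊢
  rw [Pi.div_apply]
  field_simp
  linear_combination -w ^ 2 * sin_sq_add_cos_sq t

theorem integral_one_sub_sq_div_one_sub_two_mul_mul_cos_add_sq (hw : |w| < 1) :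
    ∫ t in (0 : ℝ)..π, (1 - w ^ 2) / (1 - 2 * w * cos t + w ^ 2) = π := by
  have hcont : Continuous fun t => (1 - w ^ 2) / (1 - 2 * w * cos t + w ^ 2) :=
    continuous_const.div (by fun_prop) (one_sub_two_mul_mul_cos_add_sq_pos hw · |>.ne')
  rw [integral_eq_sub_of_hasDerivAt (fun t _ => hasDerivAt_add_two_mul_arctan hw t)
    (hcont.intervalIntegrable _ _)]
  simp

end PoissonKernel

section CosineIntegrals

variable {z : ℝ}

theorem cos_sub_ne_zero_of_one_lt (hz : 1 < z) (θ : ℝ) : cos θ - z ≠ 0 :=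
  sub_ne_zero.mpr ((cos_le_one θ).trans_lt hz).ne

theorem Continuous.div_cos_sub (hz : 1 < z) {f : ℝ → ℝ} (hf : Continuous f) :
    Continuous fun θ => f θ / (cos θ - z) :=
  hf.div (continuous_cos.sub continuous_const) (cos_sub_ne_zero_of_one_lt hz)

theorem abs_sub_sqrt_sq_sub_one_lt_one (hz : 1 < z) : |z - √(z ^ 2 - 1)| < 1 := by
  have hs := sq_sqrt (by nlinarith : (0 : ℝ) ≤ z ^ 2 - 1)
  have hs0 := sqrt_nonneg (z ^ 2 - 1)
  rw [abs_lt]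
  constructor <;> nlinarith

/-- With `s = √(z² - 1)` and `ω = z - s`, one has `1 - 2ω cos θ + ω² = 2ω (z - cos θ)` and
`1 - ω² = 2ωs`, so `1 / (cos θ - z)` is `-1 / s` times the Poisson kernel at `ω`. -/
theorem integral_one_div_cos_sub (hz : 1 < z) :
    ∫ θ in (0 : ℝ)..π, 1 / (cos θ - z) = -(π / √(z ^ 2 - 1)) := by
  have hω := abs_sub_sqrt_sq_sub_one_lt_one hz
  set s := √(z ^ 2 - 1)
  have hs : s ^ 2 = z ^ 2 - 1 := sq_sqrt (by nlinarith)
  have hs0 : 0 < s := sqrt_pos.mpr (by nlinarith)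
  have hωpos : 0 < z - s := by nlinarith
  have hkernel : ∀ θ, 1 / (cos θ - z) =
      -(1 / s) * ((1 - (z - s) ^ 2) / (1 - 2 * (z - s) * cos θ + (z - s) ^ 2)) := by
    intro θ
    have hcz := cos_sub_ne_zero_of_one_lt hz θ
    have hzc : z - cos θ ≠ 0 := fun h => hcz (by linarith)
    have hden : 1 - 2 * (z - s) * cos θ + (z - s) ^ 2 = 2 * (z - s) * (z - cos θ) := by
      linear_combination hs
    rw [hden]
    field_simp
    linear_combination (cos θ - z) * hs
  simp_rw [hkernel, integral_const_mul, integral_one_sub_sq_div_one_sub_two_mul_mul_cos_add_sq hω]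
  ring

theorem integral_cos_nat_succ_mul (k : ℕ) : ∫ θ in (0 : ℝ)..π, cos ((k + 1 : ℕ) * θ) = 0 := by
  rw [integral_comp_mul_left (fun x => cos x) (by positivity), integral_cos, sin_nat_mul_pi]
  simp

theorem integral_cos_nat_add_two_mul_div_cos_sub (hz : 1 < z) (k : ℕ) :
    ∫ θ in (0 : ℝ)..π, cos ((k + 2 : ℕ) * θ) / (cos θ - z) =
      2 * z * (∫ θ in (0 : ℝ)..π, cos ((k + 1 : ℕ) * θ) / (cos θ - z)) -
        ∫ θ in (0 : ℝ)..π, cos (k * θ) / (cos θ - z) := by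
  have hsplit : ∀ θ, cos ((k + 2 : ℕ) * θ) / (cos θ - z) =
      2 * cos ((k + 1 : ℕ) * θ) + 2 * z * (cos ((k + 1 : ℕ) * θ) / (cos θ - z)) -
        cos (k * θ) / (cos θ - z) := by
    intro θ
    have hcz := cos_sub_ne_zero_of_one_lt hz θ
    have hcos : cos ((k + 2 : ℕ) * θ) = 2 * cos θ * cos ((k + 1 : ℕ) * θ) - cos (k * θ) := by
      have h1 : ((k + 2 : ℕ) : ℝ) * θ = (k + 1 : ℕ) * θ + θ := by push_cast; ring
      have h2 : (k : ℝ) * θ = (k + 1 : ℕ) * θ - θ := by push_cast; ring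
      rw [h1, h2, cos_add, cos_sub]
      ring
    rw [hcos]
    field_simp
    ring
  have hint (j : ℝ) :
      IntervalIntegrable (fun θ => cos (j * θ) / (cos θ - z)) MeasureTheory.volume 0 π :=
    ((by fun_prop : Continuous fun θ => cos (j * θ)).div_cos_sub hz).intervalIntegrable 0 π
  have hcos_int : IntervalIntegrable (fun θ => cos ((k + 1 : ℕ) * θ)) MeasureTheory.volume 0 π :=
    (by fun_prop : Continuous fun θ => cos ((k + 1 : ℕ) * θ)).intervalIntegrable 0 π
  simp_rw [hsplit]
  rw [integral_sub ((hcos_int.const_mul 2).add ((hint _).const_mul _)) (hint _),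
    integral_add (hcos_int.const_mul 2) ((hint _).const_mul _), integral_const_mul,
    integral_const_mul, integral_cos_nat_succ_mul]
  ring

theorem integral_cos_nat_mul_div_cos_sub (hz : 1 < z) (k : ℕ) :
    ∫ θ in (0 : ℝ)..π, cos (k * θ) / (cos θ - z) =
      -(π * (z - √(z ^ 2 - 1)) ^ k / √(z ^ 2 - 1)) := by
  have hs : √(z ^ 2 - 1) ^ 2 = z ^ 2 - 1 := sq_sqrt (by nlinarith)
  have hs0 : 0 < √(z ^ 2 - 1) := sqrt_pos.mpr (by nlinarith)
  induction k using Nat.twoStepInduction with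
  | zero =>
    simp only [Nat.cast_zero, zero_mul, cos_zero, integral_one_div_cos_sub hz]
    ring
  | one =>
    have hsplit : ∀ θ, cos ((1 : ℕ) * θ) / (cos θ - z) = 1 + z * (1 / (cos θ - z)) := by
      intro θ
      have := cos_sub_ne_zero_of_one_lt hz θ
      rw [Nat.cast_one, one_mul]
      field_simp
      ring
    simp_rw [hsplit]
    rw [integral_add intervalIntegrable_const
      (((continuous_const.div_cos_sub hz).intervalIntegrable 0 π).const_mul z),
      integral_const_mul, integral_one_div_cos_sub hz, integral_const]
    field_simp
    ring
  | more k ih₀ ih₁ =>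
    rw [integral_cos_nat_add_two_mul_div_cos_sub hz, ih₀, ih₁]
    field_simp
    linear_combination (z - √(z ^ 2 - 1)) ^ k * hs

end CosineIntegrals

theorem integral_comp_cos_mul_sin {f : ℝ → ℝ} (hf : ContinuousOn f (Icc (-1) 1)) :
    ∫ θ in (0 : ℝ)..π, f (cos θ) * sin θ = ∫ x in (-1 : ℝ)..1, f x := by
  have hsub := integral_comp_mul_deriv' (a := π) (b := 0) (f := cos) (f' := fun t => -sin t)
    (g := f) (fun t _ => hasDerivAt_cos t) continuous_sin.neg.continuousOn
    (hf.mono (image_subset_iff.mpr fun t _ => ⟨neg_one_le_cos t, cos_le_one t⟩))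
  rw [cos_pi, cos_zero] at hsub
  rw [← hsub, integral_symm, ← integral_neg]
  simp

theorem cos_natAbs_mul (k : ℤ) (θ : ℝ) : cos (k.natAbs * θ) = cos (k * θ) := by
  rw [Nat.cast_natAbs, Int.cast_abs]
  rcases abs_choice (k : ℝ) with h | h <;> simp [h]

theorem U_real_cos_mul_U_real_cos_mul_sin_sq (n m : ℤ) (θ : ℝ) :
    (Polynomial.Chebyshev.U ℝ n).eval (cos θ) * (Polynomial.Chebyshev.U ℝ m).eval (cos θ) *
        sin θ ^ 2 = (cos ((n - m) * θ) - cos ((n + m + 2) * θ)) / 2 := by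
  calc _ = (Polynomial.Chebyshev.U ℝ n).eval (cos θ) * sin θ *
        ((Polynomial.Chebyshev.U ℝ m).eval (cos θ) * sin θ) := by ring
    _ = 2 * sin ((n + 1) * θ) * sin ((m + 1) * θ) / 2 := by
      rw [Polynomial.Chebyshev.U_real_cos, Polynomial.Chebyshev.U_real_cos]; ring
    _ = _ := by rw [two_mul_sin_mul_sin]; ring_nf

/-- For real `z > 1`, `ω = z − √(z² − 1)`, and Chebyshev polynomials of the second
kind `U_n`: `∫_{−1}^{1} U_n(λ)U_m(λ)√(1 − λ²)/(λ − z) dλ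
= π(ω^{n+m+2} − ω^{|n−m|})/(2√(z² − 1))`. -/
theorem stmt12 (z : ℝ) (hz : 1 < z) (n m : ℕ) :
    ∫ x in (-1 : ℝ)..1,
        (Polynomial.Chebyshev.U ℝ (n : ℤ)).eval x *
          (Polynomial.Chebyshev.U ℝ (m : ℤ)).eval x * Real.sqrt (1 - x ^ 2) / (x - z) =
      Real.pi *
        ((z - Real.sqrt (z ^ 2 - 1)) ^ (n + m + 2) -
          (z - Real.sqrt (z ^ 2 - 1)) ^ ((n : ℤ) - (m : ℤ)).natAbs) /
        (2 * Real.sqrt (z ^ 2 - 1)) := by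
  have hcont : ContinuousOn (fun x => (Polynomial.Chebyshev.U ℝ (n : ℤ)).eval x *
      (Polynomial.Chebyshev.U ℝ (m : ℤ)).eval x * √(1 - x ^ 2) / (x - z)) (Icc (-1) 1) :=
    ContinuousOn.div (by fun_prop) (by fun_prop) fun x hx => sub_ne_zero.mpr (hx.2.trans_lt hz).ne
  have hpt : ∀ θ ∈ uIcc 0 π,
      (Polynomial.Chebyshev.U ℝ (n : ℤ)).eval (cos θ) *
        (Polynomial.Chebyshev.U ℝ (m : ℤ)).eval (cos θ) * √(1 - cos θ ^ 2) / (cos θ - z) *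
          sin θ =
        cos (((n : ℤ) - m).natAbs * θ) / (cos θ - z) / 2 -
          cos ((n + m + 2 : ℕ) * θ) / (cos θ - z) / 2 := by
    intro θ hθ
    rw [uIcc_of_le pi_pos.le] at hθ
    rw [← sin_eq_sqrt_one_sub_cos_sq hθ.1 hθ.2, cos_natAbs_mul]
    have := U_real_cos_mul_U_real_cos_mul_sin_sq n m θ
    push_cast at this ⊢
    linear_combination this / (cos θ - z)
  have hint (k : ℕ) : IntervalIntegrable (fun θ => cos (k * θ) / (cos θ - z) / 2)
      MeasureTheory.volume 0 π :=
    (((by fun_prop : Continuous fun θ => cos (k * θ)).div_cos_sub hz).div_const 2).intervalIntegrable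
      0 π
  rw [← integral_comp_cos_mul_sin hcont, integral_congr hpt, integral_sub (hint _) (hint _),
    integral_div, integral_div, integral_cos_nat_mul_div_cos_sub hz,
    integral_cos_nat_mul_div_cos_sub hz]
  have hs0 : 0 < √(z ^ 2 - 1) := sqrt_pos.mpr (by nlinarith)
  field_simp
  ring
end

section
/- Let z > 1 be real, set ω = z − √(z² − 1), and let T_n denote the Chebyshev polynomial of the first kind of degree n. Then for all n, m ∈ ℕ, ∫_{−1}^{1} T_n(λ)·T_m(λ)/((λ − z)·√(1 − λ²)) dλ = −π·(ω^{n+m} + ω^{|n−m|})/(2√(z² − 1)). In particular, for n = m = 0 the integral equals −π/√(z² − 1). -/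
/-!
Write the integral against the Chebyshev measure `dμ = dx / √(1 - x²)` on `[-1, 1]` (Mathlib's
`measureT`). The product formula `2 T_n T_m = T_{n+m} + T_{|n-m|}` reduces everything to
`I_k = ∫ T_k(x) / (x - z) dμ`. Since `x / (x - z) = 1 + z / (x - z)` and
`∫ T_k dμ = π δ_{k0}`, the three-term recurrence of `T` gives `I_1 = π + z I_0` and
`I_{k+2} = 2z I_{k+1} - I_k`, the recurrence solved by `ω^k` because `ω² = 2zω - 1`.
Finally `I_0 = -π / √(z² - 1)`, as `arcsin ((1 - z x) / (z - x)) / √(z² - 1)` is an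
antiderivative: `x ↦ (1 - z x) / (z - x)` maps `[-1, 1]` onto itself reversing orientation.
-/

open Real Polynomial Polynomial.Chebyshev MeasureTheory Set

lemma intervalIntegral_div_mul_sqrt_eq_integral_measureT (f : ℝ → ℝ) (z : ℝ) :
    ∫ x in (-1 : ℝ)..1, f x / ((x - z) * √(1 - x ^ 2)) =
      ∫ x, f x / (x - z) ∂measureT := by
  rw [integral_measureT]
  refine intervalIntegral.integral_congr fun x _ => ?_
  simp only [sqrt_inv, div_eq_mul_inv, mul_inv, mul_assoc]

lemma ae_mem_Ioc_measureT : ∀ᵐ x ∂measureT, x ∈ Ioc (-1 : ℝ) 1 :=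
  ae_restrict_mem measurableSet_Ioc

lemma integrable_eval_div_sub_measureT {z : ℝ} (hz : z ∉ Icc (-1 : ℝ) 1) (p : ℝ[X]) :
    Integrable (fun x => p.eval x / (x - z)) measureT :=
  integrable_measureT <| p.continuous.continuousOn.div (continuousOn_id.sub continuousOn_const)
    fun _ hx h => hz (sub_eq_zero.mp h ▸ hx)

lemma hasDerivAt_arcsin_div_sub {z x : ℝ} (hz : 1 < z) (hx : x ∈ Ioo (-1 : ℝ) 1) :
    HasDerivAt (fun y => arcsin ((1 - z * y) / (z - y)) / √(z ^ 2 - 1))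
      ((x - z)⁻¹ * √(1 - x ^ 2)⁻¹) x := by
  obtain ⟨hx₁, hx₂⟩ := hx
  have hzx : 0 < z - x := by linarith
  have hxz : x - z ≠ 0 := by linarith
  have hs : √(z ^ 2 - 1) ^ 2 = z ^ 2 - 1 := sq_sqrt (by nlinarith)
  have hr : √(1 - x ^ 2) ^ 2 = 1 - x ^ 2 := sq_sqrt (by nlinarith)
  have hs₀ : 0 < √(z ^ 2 - 1) := sqrt_pos.mpr (by nlinarith)
  have hr₀ : 0 < √(1 - x ^ 2) := sqrt_pos.mpr (by nlinarith)
  have hu : 1 - ((1 - z * x) / (z - x)) ^ 2 = (√(z ^ 2 - 1) * √(1 - x ^ 2) / (z - x)) ^ 2 := by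
    field_simp
    rw [hs, hr]
    ring
  have hu₀ : 0 < 1 - ((1 - z * x) / (z - x)) ^ 2 := hu ▸ by positivity
  have hu' : HasDerivAt (fun y => (1 - z * y) / (z - y)) ((1 - z ^ 2) / (z - x) ^ 2) x :=
    (((hasDerivAt_id x).const_mul z).const_sub 1 |>.div ((hasDerivAt_id x).const_sub z)
      hzx.ne').congr_deriv (by simp only [id]; ring)
  refine (((hasDerivAt_arcsin (by nlinarith) (by nlinarith)).comp x hu').div_const _).congr_deriv ?_
  rw [hu, sqrt_sq (by positivity), sqrt_inv]
  field_simp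
  linear_combination (x - z) * hs

lemma integral_inv_sub_measureT {z : ℝ} (hz : 1 < z) :
    ∫ x, (x - z)⁻¹ ∂measureT = -(π / √(z ^ 2 - 1)) := by
  have hcont :
      ContinuousOn (fun y => arcsin ((1 - z * y) / (z - y)) / √(z ^ 2 - 1)) (Icc (-1) 1) :=
    (continuous_arcsin.comp_continuousOn <|
      (continuous_const.sub (continuous_const_mul z)).continuousOn.div
        (continuous_sub_left z).continuousOn fun y hy => by linarith [hy.2]).div_const _
  have hint : IntervalIntegrable (fun x => (x - z)⁻¹ * √(1 - x ^ 2)⁻¹) volume (-1) 1 :=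
    intervalIntegrable_sqrt_one_sub_sq_inv.continuousOn_mul <|
      (continuous_sub_right z).continuousOn.inv₀ fun y hy => by
        rw [uIcc_of_le (by norm_num)] at hy; exact sub_ne_zero.mpr (by linarith [hy.2])
  rw [integral_measureT, intervalIntegral.integral_eq_sub_of_hasDerivAt_of_le (by norm_num) hcont
    (fun x hx => hasDerivAt_arcsin_div_sub hz hx) hint]
  have h₁ : (1 - z * 1) / (z - 1) = -1 := by rw [div_eq_iff (by linarith)]; ring
  have h₂ : (1 - z * -1) / (z - -1) = 1 := by rw [div_eq_one_iff_eq (by linarith)]; ring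
  simp only [h₁, h₂, arcsin_neg_one, arcsin_one]
  ring

lemma integral_eval_T_one_div_sub_measureT {z : ℝ} (hz : z ∉ Icc (-1 : ℝ) 1) :
    ∫ x, (T ℝ 1).eval x / (x - z) ∂measureT =
      π + z * ∫ x, (T ℝ 0).eval x / (x - z) ∂measureT := by
  have h : (fun x => (T ℝ 1).eval x / (x - z)) =ᵐ[measureT]
      fun x => (T ℝ 0).eval x + z * ((T ℝ 0).eval x / (x - z)) := by
    filter_upwards [ae_mem_Ioc_measureT] with x hx
    have : x - z ≠ 0 := sub_ne_zero.mpr fun h => hz (h ▸ Ioc_subset_Icc_self hx)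
    simp only [T_one, T_zero, eval_X, eval_one]
    field_simp
    ring
  rw [integral_congr_ae h, integral_add (integrable_measureT (T ℝ 0).continuous.continuousOn)
    ((integrable_eval_div_sub_measureT hz _).const_mul z), integral_const_mul,
    integral_eval_T_real_measureT_zero]

lemma integral_eval_T_add_two_div_sub_measureT {z : ℝ} (hz : z ∉ Icc (-1 : ℝ) 1) (k : ℤ)
    (hk : k + 1 ≠ 0) :
    ∫ x, (T ℝ (k + 2)).eval x / (x - z) ∂measureT =
      2 * z * ∫ x, (T ℝ (k + 1)).eval x / (x - z) ∂measureT -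
        ∫ x, (T ℝ k).eval x / (x - z) ∂measureT := by
  have h : (fun x => (T ℝ (k + 2)).eval x / (x - z)) =ᵐ[measureT] fun x =>
      2 * (T ℝ (k + 1)).eval x + 2 * z * ((T ℝ (k + 1)).eval x / (x - z)) -
        (T ℝ k).eval x / (x - z) := by
    filter_upwards [ae_mem_Ioc_measureT] with x hx
    have : x - z ≠ 0 := sub_ne_zero.mpr fun h => hz (h ▸ Ioc_subset_Icc_self hx)
    simp only [T_add_two, eval_sub, eval_mul, eval_X, eval_ofNat]
    field_simp
    ring
  have hT := (integrable_measureT (T ℝ (k + 1)).continuous.continuousOn).const_mul 2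
  have hD := (integrable_eval_div_sub_measureT hz (T ℝ (k + 1))).const_mul (2 * z)
  rw [integral_congr_ae h, integral_sub (hT.fun_add hD) (integrable_eval_div_sub_measureT hz _),
    integral_add hT hD, integral_const_mul, integral_const_mul,
    integral_eval_T_real_measureT_of_ne_zero hk]
  ring

lemma integral_eval_T_div_sub_measureT {z : ℝ} (hz : 1 < z) (k : ℕ) :
    ∫ x, (T ℝ k).eval x / (x - z) ∂measureT =
      -(π * (z - √(z ^ 2 - 1)) ^ k / √(z ^ 2 - 1)) := by
  have hz' : z ∉ Icc (-1 : ℝ) 1 := fun h => hz.not_ge h.2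
  have hs : √(z ^ 2 - 1) ^ 2 = z ^ 2 - 1 := sq_sqrt (by nlinarith)
  have hs₀ : √(z ^ 2 - 1) ≠ 0 := (sqrt_pos.mpr (by nlinarith)).ne'
  have h₀ : ∫ x, (T ℝ 0).eval x / (x - z) ∂measureT = -(π / √(z ^ 2 - 1)) := by
    simpa using integral_inv_sub_measureT hz
  induction k using Nat.twoStepInduction with
  | zero => simpa using h₀
  | one =>
    rw [Nat.cast_one, integral_eval_T_one_div_sub_measureT hz', h₀]
    field_simp
    ring
  | more k ih₀ ih₁ =>
    push_cast at ih₁ ⊢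
    rw [integral_eval_T_add_two_div_sub_measureT hz' k (by omega), ih₀, ih₁]
    field_simp
    linear_combination (z - √(z ^ 2 - 1)) ^ k * hs

lemma eval_T_mul_eval_T_div (n m : ℕ) (x z : ℝ) :
    (T ℝ n).eval x * (T ℝ m).eval x / (x - z) =
      ((T ℝ (n + m : ℕ)).eval x / (x - z) +
        (T ℝ ((n : ℤ) - m).natAbs).eval x / (x - z)) / 2 := by
  have h := congrArg (eval x) (T_mul_T ℝ n m)
  simp only [eval_mul, eval_add, eval_ofNat] at h
  rw [T_natAbs, ← add_div, Nat.cast_add, ← h]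
  ring

/-- For real `z > 1`, `ω = z − √(z² − 1)`, and Chebyshev polynomials of the first
kind `T_n`: `∫_{−1}^{1} T_n(λ)T_m(λ)/((λ − z)√(1 − λ²)) dλ
= −π(ω^{n+m} + ω^{|n−m|})/(2√(z² − 1))`; in particular for `n = m = 0` the
integral equals `−π/√(z² − 1)`. -/
theorem stmt13 (z : ℝ) (hz : 1 < z) (n m : ℕ) :
    ∫ x in (-1 : ℝ)..1,
        (Polynomial.Chebyshev.T ℝ (n : ℤ)).eval x *
          (Polynomial.Chebyshev.T ℝ (m : ℤ)).eval x /
            ((x - z) * Real.sqrt (1 - x ^ 2)) =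
      -(Real.pi *
          ((z - Real.sqrt (z ^ 2 - 1)) ^ (n + m) +
            (z - Real.sqrt (z ^ 2 - 1)) ^ ((n : ℤ) - (m : ℤ)).natAbs) /
          (2 * Real.sqrt (z ^ 2 - 1))) := by
  have hz' : z ∉ Icc (-1 : ℝ) 1 := fun h => hz.not_ge h.2
  simp_rw [intervalIntegral_div_mul_sqrt_eq_integral_measureT, eval_T_mul_eval_T_div]
  rw [integral_div, integral_add (integrable_eval_div_sub_measureT hz' _)
    (integrable_eval_div_sub_measureT hz' _), integral_eval_T_div_sub_measureT hz,
    integral_eval_T_div_sub_measureT hz]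
  ring
end

section
/- Let a > 0 and let z > 1 be real with D := 1 + (1 − a²)·ω² ≠ 0, where ω = z − √(z² − 1). Then the series whose 0-th term is −2(a² − 1)·ω³/D and whose n-th term for n ≥ 1 is −4(a² − 1)·z·ω^{2n+2}/D converges absolutely, and its sum equals 2(1 − a²)·ω²/(D·√(z² − 1)). -/
/-!
Write `s = √(z² - 1)`. Then `ω (z + s) = 1` and `1 - ω² = 2 s ω`, so `0 < ω < 1` and the terms with
`n ≥ 1` form a geometric series of ratio `ω²`. Summing it, the total is
`-2 (a² - 1) ω³ (1 + z / s) / D`, and `ω (s + z) = 1` reduces this to the claimed value.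
-/

open Real

theorem hasSum_ite_zero_mul_geometric {K : Type*} [NormedField K] [CompleteSpace K] {r : K}
    (hr : ‖r‖ < 1) (b c : K) :
    HasSum (fun n : ℕ => if n = 0 then b else c * r ^ n) (b + c * r / (1 - r)) := by
  rw [← hasSum_nat_add_iff' 1]
  simp only [Nat.add_eq_zero_iff, one_ne_zero, and_false, if_false, Finset.range_one,
    Finset.sum_singleton, if_true, add_sub_cancel_left]
  simpa only [pow_succ', ← mul_assoc, ← div_eq_mul_inv] using
    (hasSum_geometric_of_norm_lt_one hr).mul_left (c * r)

section
variable {z : ℝ}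

theorem sub_sqrt_sq_sub_one_mul_add (hz : 1 ≤ z ^ 2) :
    (z - √(z ^ 2 - 1)) * (z + √(z ^ 2 - 1)) = 1 := by
  nlinarith [sq_sqrt (sub_nonneg.mpr hz)]

theorem one_sub_sq_sub_sqrt_sq_sub_one (hz : 1 ≤ z ^ 2) :
    1 - (z - √(z ^ 2 - 1)) ^ 2 = 2 * √(z ^ 2 - 1) * (z - √(z ^ 2 - 1)) := by
  nlinarith [sq_sqrt (sub_nonneg.mpr hz)]

theorem sqrt_sq_sub_one_lt_self (hz : 1 ≤ z) : √(z ^ 2 - 1) < z := by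
  rw [sqrt_lt' (by linarith)]; linarith

theorem sub_sqrt_sq_sub_one_pos (hz : 1 ≤ z) : 0 < z - √(z ^ 2 - 1) :=
  sub_pos.mpr (sqrt_sq_sub_one_lt_self hz)

theorem sub_sqrt_sq_sub_one_lt_one (hz : 1 < z) : z - √(z ^ 2 - 1) < 1 := by
  have := sub_sqrt_sq_sub_one_mul_add (one_le_pow₀ hz.le : 1 ≤ z ^ 2)
  nlinarith [sqrt_nonneg (z ^ 2 - 1), sub_sqrt_sq_sub_one_pos hz.le]

end

theorem stmt14_general (a z : ℝ) (hz : 1 < z)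
    (hD : 1 + (1 - a ^ 2) * (z - Real.sqrt (z ^ 2 - 1)) ^ 2 ≠ 0) :
    let ω : ℝ := z - Real.sqrt (z ^ 2 - 1)
    let D : ℝ := 1 + (1 - a ^ 2) * ω ^ 2
    let f : ℕ → ℝ := fun n =>
      if n = 0 then -2 * (a ^ 2 - 1) * ω ^ 3 / D
      else -4 * (a ^ 2 - 1) * z * ω ^ (2 * n + 2) / D
    Summable (fun n : ℕ => |f n|) ∧
    ∑' n : ℕ, f n = 2 * (1 - a ^ 2) * ω ^ 2 / (D * Real.sqrt (z ^ 2 - 1)) := by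
  intro ω D f
  have hz2 : 1 ≤ z ^ 2 := one_le_pow₀ hz.le
  have hs : 0 < √(z ^ 2 - 1) := sqrt_pos.mpr (by nlinarith)
  have hω0 : 0 < ω := sub_sqrt_sq_sub_one_pos hz.le
  have hω1 : ω < 1 := sub_sqrt_sq_sub_one_lt_one hz
  have hf : f = fun n => if n = 0 then -2 * (a ^ 2 - 1) * ω ^ 3 / D
      else -4 * (a ^ 2 - 1) * z * ω ^ 2 / D * (ω ^ 2) ^ n := by
    funext n
    simp only [f, ← pow_mul]
    split_ifs <;> ring
  have hsum := hasSum_ite_zero_mul_geometric (r := ω ^ 2)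
    (by rw [norm_pow, Real.norm_of_nonneg hω0.le]; exact pow_lt_one₀ hω0.le hω1 two_ne_zero)
    (-2 * (a ^ 2 - 1) * ω ^ 3 / D) (-4 * (a ^ 2 - 1) * z * ω ^ 2 / D)
  rw [← hf] at hsum
  refine ⟨summable_abs_iff.mpr hsum.summable, hsum.tsum_eq.trans ?_⟩
  have hD' : D ≠ 0 := hD
  have hωs : ω * (z + √(z ^ 2 - 1)) = 1 := sub_sqrt_sq_sub_one_mul_add hz2
  rw [show 1 - ω ^ 2 = 2 * √(z ^ 2 - 1) * ω from one_sub_sq_sub_sqrt_sq_sub_one hz2]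
  clear_value ω D
  field_simp
  linear_combination -4 * (a ^ 2 - 1) * hωs

/-- Trace formula: for `a > 0`, real `z > 1` with `D = 1 + (1 − a²)ω² ≠ 0`
(`ω = z − √(z² − 1)`), the series with 0-th term `−2(a² − 1)ω³/D` and `n`-th term
(`n ≥ 1`) `−4(a² − 1)zω^{2n+2}/D` converges absolutely and its sum equals
`2(1 − a²)ω²/(D√(z² − 1))`. -/
theorem stmt14 (a z : ℝ) (ha : 0 < a) (hz : 1 < z)
    (hD : 1 + (1 - a ^ 2) * (z - Real.sqrt (z ^ 2 - 1)) ^ 2 ≠ 0) :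
    let ω : ℝ := z - Real.sqrt (z ^ 2 - 1)
    let D : ℝ := 1 + (1 - a ^ 2) * ω ^ 2
    let f : ℕ → ℝ := fun n =>
      if n = 0 then -2 * (a ^ 2 - 1) * ω ^ 3 / D
      else -4 * (a ^ 2 - 1) * z * ω ^ (2 * n + 2) / D
    Summable (fun n : ℕ => |f n|) ∧
    ∑' n : ℕ, f n = 2 * (1 - a ^ 2) * ω ^ 2 / (D * Real.sqrt (z ^ 2 - 1)) :=
  stmt14_general a z hz hD
end

section
/- Let a ∈ (0, √2) and for m ∈ ℕ set κ_{2m}(a) = (2a²/π)·∫_{−1}^{1} λ^{2m}·√(1 − λ²)/(a⁴ − 4(a² − 1)λ²) dλ. Then √π·m^{3/2}·κ_{2m}(a) → a²/(a² − 2)² as m → ∞. -/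
/-!
Substituting `x = cos θ` gives `∫_{-1}^1 x^{2m} √(1 - x²) dx = ∫_0^π cos^{2m} θ sin² θ dθ
= (∫_0^π sin^{2m}) / (2m + 2)`, and Wallis' product shows `√m ∫_0^π sin^{2m} → √π`; hence
`m^{3/2}` times this moment tends to `√π / 2`.

The denominator `a⁴ - 4(a² - 1)x² = (1 - x²) a⁴ + x² (a² - 2)²` is a convex combination of two
positive numbers, so its reciprocal differs from its value `(a² - 2)⁻²` at `x = ±1` by
`O(1 - x²)`. Since `∫_{-1}^1 x^{2m} (1 - x²) dx = O(m⁻²)`, this error is negligible against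
`m^{-3/2}`, and the moment of the density is asymptotic to `(a² - 2)⁻²` times the unweighted one.
-/

open Real Filter Topology Finset intervalIntegral

theorem prod_sq_mul_W_mul_eq_one (m : ℕ) :
    (∏ i ∈ range m, (2 * (i : ℝ) + 1) / (2 * i + 2)) ^ 2 * Wallis.W m * (2 * m + 1) = 1 := by
  induction m with
  | zero => simp [Wallis.W]
  | succ m ih =>
    rw [prod_range_succ, Wallis.W_succ]
    set P := ∏ i ∈ range m, (2 * (i : ℝ) + 1) / (2 * i + 2)
    push_cast
    field_simp
    linear_combination (2 * (m : ℝ) + 3) * ih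

theorem tendsto_sqrt_mul_integral_sin_pow_even :
    Tendsto (fun m : ℕ => √m * ∫ x in 0..π, sin x ^ (2 * m)) atTop (𝓝 √π) := by
  -- the square of the sequence is `m π² / ((2m + 1) W m)` by `prod_sq_mul_W_mul_eq_one`
  have hratio : Tendsto (fun m : ℕ => (0 + 1 * (m : ℝ)) / (1 + 2 * m) * π ^ 2 / Wallis.W m)
      atTop (𝓝 (1 / 2 * π ^ 2 / (π / 2))) :=
    ((tendsto_add_mul_div_add_mul_atTop_nhds 0 1 1 two_ne_zero).mul_const _).div
      Wallis.tendsto_W_nhds_pi_div_two (by positivity)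
  have hlim : 1 / 2 * π ^ 2 / (π / 2) = π := by field_simp
  rw [hlim] at hratio
  refine hratio.sqrt.congr fun m => ?_
  have hW := prod_sq_mul_W_mul_eq_one m
  have hWpos := Wallis.W_pos m
  rw [integral_sin_pow_even]
  set P := ∏ i ∈ range m, (2 * (i : ℝ) + 1) / (2 * i + 2)
  rw [← sqrt_sq (by positivity : 0 ≤ √(m : ℝ) * (π * P)), mul_pow, sq_sqrt (Nat.cast_nonneg _)]
  congr 1
  field_simp
  linear_combination (-(m : ℝ)) * hW

theorem integral_cos_pow_even_eq_integral_sin_pow_even (m : ℕ) :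
    ∫ x in 0..π, cos x ^ (2 * m) = ∫ x in 0..π, sin x ^ (2 * m) := by
  induction m with
  | zero => simp
  | succ m ih => simp [Nat.mul_succ, integral_cos_pow, integral_sin_pow, ih]

theorem integral_pow_mul_sqrt_one_sub_sq (m : ℕ) :
    ∫ x in (-1 : ℝ)..1, x ^ (2 * m) * √(1 - x ^ 2) =
      (∫ x in 0..π, sin x ^ (2 * m)) / (2 * m + 2) := by
  have hsubst : ∫ x in (-1 : ℝ)..1, x ^ (2 * m) * √(1 - x ^ 2) =
      ∫ θ in 0..π, cos θ ^ (2 * m) - cos θ ^ (2 * m + 2) := by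
    have h := integral_comp_mul_deriv (a := 0) (b := π) (f := cos) (f' := fun θ => -sin θ)
      (g := fun x => x ^ (2 * m) * √(1 - x ^ 2)) (fun θ _ => hasDerivAt_cos θ)
      (by fun_prop) (by fun_prop)
    rw [cos_zero, cos_pi] at h
    rw [integral_symm, ← h, ← integral_neg]
    refine integral_congr fun θ hθ => ?_
    rw [Set.uIcc_of_le pi_pos.le] at hθ
    simp only [Function.comp, ← sin_sq, sqrt_sq (sin_nonneg_of_mem_Icc hθ)]
    linear_combination cos θ ^ (2 * m) * sin_sq_add_cos_sq θ
  have hint (n : ℕ) : IntervalIntegrable (fun θ => cos θ ^ n) MeasureTheory.volume 0 π := by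
    apply Continuous.intervalIntegrable; fun_prop
  rw [hsubst, integral_sub (hint _) (hint _), integral_cos_pow,
    integral_cos_pow_even_eq_integral_sin_pow_even]
  simp only [sin_pi, sin_zero, mul_zero, sub_zero, zero_div, zero_add]
  push_cast
  field_simp
  ring

theorem tendsto_integral_pow_mul_sqrt_one_sub_sq :
    Tendsto (fun m : ℕ => m * √m * ∫ x in (-1 : ℝ)..1, x ^ (2 * m) * √(1 - x ^ 2))
      atTop (𝓝 (√π / 2)) := by
  have h := tendsto_sqrt_mul_integral_sin_pow_even.mul
    (tendsto_add_mul_div_add_mul_atTop_nhds (0 : ℝ) 2 1 two_ne_zero)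
  rw [mul_one_div] at h
  refine h.congr fun m => ?_
  rw [integral_pow_mul_sqrt_one_sub_sq]
  field_simp
  ring

theorem integral_pow_mul_one_sub_sq (m : ℕ) :
    ∫ x in (-1 : ℝ)..1, x ^ (2 * m) * (1 - x ^ 2) = (4 : ℝ) / ((2 * m + 1) * (2 * m + 3)) := by
  simp only [mul_sub, mul_one, ← pow_add]
  rw [integral_sub (intervalIntegral.intervalIntegrable_pow _)
    (intervalIntegral.intervalIntegrable_pow _), integral_pow, integral_pow,
    (odd_two_mul_add_one m).neg_one_pow, (by ring : 2 * m + 2 + 1 = 2 * (m + 1) + 1),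
    (odd_two_mul_add_one (m + 1)).neg_one_pow]
  push_cast
  field_simp
  ring

theorem abs_integral_pow_mul_sqrt_one_sub_sq_mul_le {g : ℝ → ℝ} {K : ℝ}
    (hgK : ∀ x ∈ Set.Icc (-1 : ℝ) 1, |g x| ≤ K * (1 - x ^ 2)) (m : ℕ) :
    |∫ x in (-1 : ℝ)..1, x ^ (2 * m) * √(1 - x ^ 2) * g x| ≤
      4 * K / ((2 * m + 1) * (2 * m + 3)) := by
  calc |∫ x in (-1 : ℝ)..1, x ^ (2 * m) * √(1 - x ^ 2) * g x|
      ≤ ∫ x in (-1 : ℝ)..1, K * (x ^ (2 * m) * (1 - x ^ 2)) := by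
        rw [← Real.norm_eq_abs]
        refine norm_integral_le_of_norm_le (by norm_num) (MeasureTheory.ae_of_all _ fun x hx => ?_)
          (by apply Continuous.intervalIntegrable; fun_prop)
        have hx : x ∈ Set.Icc (-1 : ℝ) 1 := Set.Ioc_subset_Icc_self hx
        have hx2 : 0 ≤ 1 - x ^ 2 := by nlinarith [hx.1, hx.2]
        have hsqrt : √(1 - x ^ 2) ≤ 1 := sqrt_le_one.mpr (by linarith [sq_nonneg x])
        have hpow : 0 ≤ x ^ (2 * m) := (even_two_mul m).pow_nonneg x
        have hg := hgK x hx
        rw [Real.norm_eq_abs, abs_mul, abs_mul, abs_of_nonneg (sqrt_nonneg _), abs_of_nonneg hpow]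
        calc x ^ (2 * m) * √(1 - x ^ 2) * |g x| ≤ x ^ (2 * m) * 1 * (K * (1 - x ^ 2)) := by
              gcongr
          _ = _ := by ring
    _ = 4 * K / ((2 * m + 1) * (2 * m + 3)) := by
        rw [integral_const_mul, integral_pow_mul_one_sub_sq]
        ring

theorem tendsto_mul_sqrt_div_mul_add_mul_add :
    Tendsto (fun m : ℕ => (m : ℝ) * √m / ((2 * m + 1) * (2 * m + 3))) atTop (𝓝 0) := by
  refine squeeze_zero (fun m => by positivity) (fun m => ?_)
    (tendsto_inv_atTop_zero.comp (tendsto_sqrt_atTop.comp tendsto_natCast_atTop_atTop))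
  rcases (Nat.cast_nonneg (α := ℝ) m).eq_or_lt with hm | hm
  · simp [← hm]
  have hs : 0 < √(m : ℝ) := sqrt_pos.mpr hm
  rw [Function.comp_apply, Function.comp_apply, div_le_iff₀ (by positivity), inv_mul_eq_div,
    le_div_iff₀ hs, mul_assoc, mul_self_sqrt hm.le]
  nlinarith

theorem tendsto_integral_pow_mul_sqrt_one_sub_sq_mul {f : ℝ → ℝ} {L K : ℝ}
    (hf : IntervalIntegrable f MeasureTheory.volume (-1) 1)
    (hfL : ∀ x ∈ Set.Icc (-1 : ℝ) 1, |f x - L| ≤ K * (1 - x ^ 2)) :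
    Tendsto (fun m : ℕ => m * √m * ∫ x in (-1 : ℝ)..1, x ^ (2 * m) * √(1 - x ^ 2) * f x)
      atTop (𝓝 (L * (√π / 2))) := by
  have hsplit (m : ℕ) : ∫ x in (-1 : ℝ)..1, x ^ (2 * m) * √(1 - x ^ 2) * f x =
      L * (∫ x in (-1 : ℝ)..1, x ^ (2 * m) * √(1 - x ^ 2)) +
        ∫ x in (-1 : ℝ)..1, x ^ (2 * m) * √(1 - x ^ 2) * (f x - L) := by
    have hw : Continuous fun x : ℝ => x ^ (2 * m) * √(1 - x ^ 2) := by fun_prop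
    rw [← integral_const_mul, ← integral_add]
    · exact integral_congr fun x _ => by ring
    · exact (hw.intervalIntegrable _ _).const_mul L
    · exact (hf.sub intervalIntegrable_const).continuousOn_mul hw.continuousOn
  have herr : Tendsto (fun m : ℕ => m * √m *
      ∫ x in (-1 : ℝ)..1, x ^ (2 * m) * √(1 - x ^ 2) * (f x - L)) atTop (𝓝 0) := by
    refine squeeze_zero_norm (fun m => ?_)
      (by simpa using tendsto_mul_sqrt_div_mul_add_mul_add.const_mul (4 * K))
    rw [norm_mul, Real.norm_eq_abs, Real.norm_eq_abs, abs_of_nonneg (by positivity)]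
    calc _ ≤ m * √m * (4 * K / ((2 * m + 1) * (2 * m + 3))) := by
          gcongr
          exact abs_integral_pow_mul_sqrt_one_sub_sq_mul_le hfL m
      _ = _ := by ring
  simpa [hsplit, mul_add, mul_left_comm _ L] using
    (tendsto_integral_pow_mul_sqrt_one_sub_sq.const_mul L).add herr

theorem abs_inv_combo_sub_inv_le {p q t : ℝ} (hp : 0 < p) (hq : 0 < q) (ht₀ : 0 ≤ t)
    (ht₁ : t ≤ 1) :
    |((1 - t) * p + t * q)⁻¹ - q⁻¹| ≤ |q - p| / (min p q * q) * (1 - t) := by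
  have hmin : 0 < min p q := lt_min hp hq
  have hD : min p q ≤ (1 - t) * p + t * q :=
    Convex.min_le_combo p q (sub_nonneg.2 ht₁) ht₀ (sub_add_cancel 1 t)
  have hDpos : 0 < (1 - t) * p + t * q := hmin.trans_le hD
  rw [inv_sub_inv hDpos.ne' hq.ne', abs_div, abs_of_pos (mul_pos hDpos hq),
    (by ring : q - ((1 - t) * p + t * q) = (1 - t) * (q - p)), abs_mul, abs_of_nonneg (by linarith),
    div_mul_eq_mul_div, mul_comm |q - p|]
  gcongr

theorem tendsto_integral_pow_mul_sqrt_one_sub_sq_mul_inv {p q : ℝ} (hp : 0 < p) (hq : 0 < q) :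
    Tendsto (fun m : ℕ => m * √m *
      ∫ x in (-1 : ℝ)..1, x ^ (2 * m) * √(1 - x ^ 2) * ((1 - x ^ 2) * p + x ^ 2 * q)⁻¹)
      atTop (𝓝 (q⁻¹ * (√π / 2))) := by
  have hsq {x : ℝ} (hx : x ∈ Set.Icc (-1 : ℝ) 1) : 0 ≤ x ^ 2 ∧ x ^ 2 ≤ 1 :=
    ⟨sq_nonneg x, sq_le_one_iff_abs_le_one x |>.2 (abs_le.2 hx)⟩
  refine tendsto_integral_pow_mul_sqrt_one_sub_sq_mul ?_
    fun x hx => abs_inv_combo_sub_inv_le hp hq (hsq hx).1 (hsq hx).2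
  refine ContinuousOn.intervalIntegrable (ContinuousOn.inv₀ (by fun_prop) fun x hx => ?_)
  rw [Set.uIcc_of_le (by norm_num)] at hx
  exact ((lt_min hp hq).trans_le (Convex.min_le_combo p q (sub_nonneg.2 (hsq hx).2) (hsq hx).1
    (sub_add_cancel 1 _))).ne'

/-- Asymptotics of the even moments of the spectral measure of `H_a` for
`a ∈ (0, √2)`: `√π·m^{3/2}·κ_{2m}(a) → a²/(a² − 2)²` as `m → ∞`. -/
theorem stmt16 (a : ℝ) (ha : a ∈ Set.Ioo 0 (Real.sqrt 2)) :
    Filter.Tendsto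
      (fun m : ℕ =>
        Real.sqrt Real.pi * (m : ℝ) ^ ((3 : ℝ) / 2) *
          (2 * a ^ 2 / Real.pi *
            ∫ x in (-1 : ℝ)..1,
              x ^ (2 * m) * Real.sqrt (1 - x ^ 2) /
                (a ^ 4 - 4 * (a ^ 2 - 1) * x ^ 2)))
      Filter.atTop (nhds (a ^ 2 / (a ^ 2 - 2) ^ 2)) := by
  have hp : 0 < a ^ 4 := pow_pos ha.1 4
  have hq : 0 < (a ^ 2 - 2) ^ 2 := by
    have : a ^ 2 - 2 ≠ 0 := by linarith [(lt_sqrt ha.1.le).1 ha.2]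
    positivity
  convert (tendsto_integral_pow_mul_sqrt_one_sub_sq_mul_inv hp hq).const_mul
    (√π * (2 * a ^ 2 / π)) using 1
  · funext m
    rw [(by norm_num : (3 : ℝ) / 2 = 1 + 1 / 2), rpow_add' (Nat.cast_nonneg _) (by norm_num),
      rpow_one, ← sqrt_eq_rpow]
    have hden (x : ℝ) :
        a ^ 4 - 4 * (a ^ 2 - 1) * x ^ 2 = (1 - x ^ 2) * a ^ 4 + x ^ 2 * (a ^ 2 - 2) ^ 2 := by
      ring
    simp only [hden, div_eq_mul_inv]
    ring
  · have hπ : √π ^ 2 = π := sq_sqrt pi_pos.le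
    congr 1
    field_simp
    rw [hπ]
end

section
/- Let a > 0 with a ≠ 1. Consider the complex solutions ω of the equation 1 + (1 − a²)·ω² = 0. (i) If a ∈ (0,1), the solutions are ω = ±i/√(1 − a²); they satisfy |ω| > 1 and the corresponding values z = (ω + ω^{−1})/2 are ±i·a²/(2√(1 − a²)). (ii) If a ∈ (1, √2), the solutions are ω = ±1/√(a² − 1); they satisfy |ω| > 1 and the corresponding values z = (ω + ω^{−1})/2 are ±a²/(2√(a² − 1)). (iii) If a > √2, every solution satisfies |ω| < 1. -/
/-!
Both roots of `1 + c ω² = 0` have `‖c‖ ‖ω‖² = 1`, so they lie outside the unit disc exactly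
when `‖c‖ < 1`. For `c = 1 - a²` this means `0 < a² < 2`, which is why the resonances disappear
at `a = √2`. In the two resonance regimes the roots are `±r` for an explicit `r` with
`c r² = -1`, and the Joukowski map `ω ↦ (ω + ω⁻¹)/2` is odd, so it suffices to evaluate it at `r`.
-/

lemma one_add_mul_sq_eq_zero_iff {K : Type*} [Field K] {c r : K} (hr : c * r ^ 2 = -1) (ω : K) :
    1 + c * ω ^ 2 = 0 ↔ ω = r ∨ ω = -r := by
  have hc : c ≠ 0 := by rintro rfl; simp at hr
  have hfactor : 1 + c * ω ^ 2 = c * (ω ^ 2 - r ^ 2) := by linear_combination hr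
  rw [hfactor, mul_eq_zero, or_iff_right hc, sub_eq_zero, sq_eq_sq_iff_eq_or_eq_neg]

section NormOfRoot

variable {K : Type*} [NormedField K] {c ω : K}

lemma norm_mul_norm_sq_eq_one_of_mul_sq_eq_neg_one (h : c * ω ^ 2 = -1) :
    ‖c‖ * ‖ω‖ ^ 2 = 1 := by
  simpa [norm_mul, norm_pow] using congrArg norm h

lemma one_lt_norm_of_mul_sq_eq_neg_one (h : c * ω ^ 2 = -1) (hc : ‖c‖ < 1) : 1 < ‖ω‖ := by
  have hprod := norm_mul_norm_sq_eq_one_of_mul_sq_eq_neg_one h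
  by_contra! hω
  have : ‖ω‖ ^ 2 ≤ 1 := pow_le_one₀ (norm_nonneg ω) hω
  nlinarith [norm_nonneg c]

lemma norm_lt_one_of_mul_sq_eq_neg_one (h : c * ω ^ 2 = -1) (hc : 1 < ‖c‖) : ‖ω‖ < 1 := by
  have hprod := norm_mul_norm_sq_eq_one_of_mul_sq_eq_neg_one h
  by_contra! hω
  have : 1 ≤ ‖ω‖ ^ 2 := one_le_pow₀ hω
  nlinarith

end NormOfRoot

lemma roots_of_one_add_mul_sq_of_norm_lt_one {K : Type*} [NormedField K] {c r z : K} (hr : c * r ^ 2 = -1) (hc : ‖c‖ < 1)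
    (hz : (r + r⁻¹) / 2 = z) :
    (∀ ω : K, 1 + c * ω ^ 2 = 0 ↔ ω = r ∨ ω = -r) ∧
      ∀ ω : K, 1 + c * ω ^ 2 = 0 → 1 < ‖ω‖ ∧ ((ω + ω⁻¹) / 2 = z ∨ (ω + ω⁻¹) / 2 = -z) := by
  refine ⟨one_add_mul_sq_eq_zero_iff hr, fun ω hω => ⟨?_, ?_⟩⟩
  · exact one_lt_norm_of_mul_sq_eq_neg_one (by linear_combination hω) hc
  · rcases (one_add_mul_sq_eq_zero_iff hr ω).1 hω with rfl | rfl
    · exact Or.inl hz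
    · right
      rw [inv_neg, ← hz]
      ring

lemma norm_one_sub_sq_lt_one {a : ℝ} (ha : 0 < a) (ha2 : a ^ 2 < 2) :
    ‖((1 - a ^ 2 : ℝ) : ℂ)‖ < 1 := by
  rw [Complex.norm_real, Real.norm_eq_abs, abs_lt]
  constructor <;> nlinarith

theorem stmt17_general (a : ℝ) (ha : 0 < a) :
    (a < 1 →
      (∀ ω : ℂ, 1 + ((1 - a ^ 2 : ℝ) : ℂ) * ω ^ 2 = 0 ↔
        ω = Complex.I / ((Real.sqrt (1 - a ^ 2) : ℝ) : ℂ) ∨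
        ω = -(Complex.I / ((Real.sqrt (1 - a ^ 2) : ℝ) : ℂ))) ∧
      (∀ ω : ℂ, 1 + ((1 - a ^ 2 : ℝ) : ℂ) * ω ^ 2 = 0 →
        1 < ‖ω‖ ∧
        ((ω + ω⁻¹) / 2 =
            Complex.I * ((a ^ 2 : ℝ) : ℂ) / (2 * ((Real.sqrt (1 - a ^ 2) : ℝ) : ℂ)) ∨
          (ω + ω⁻¹) / 2 =
            -(Complex.I * ((a ^ 2 : ℝ) : ℂ) / (2 * ((Real.sqrt (1 - a ^ 2) : ℝ) : ℂ)))))) ∧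
    (1 < a → a < Real.sqrt 2 →
      (∀ ω : ℂ, 1 + ((1 - a ^ 2 : ℝ) : ℂ) * ω ^ 2 = 0 ↔
        ω = (1 : ℂ) / ((Real.sqrt (a ^ 2 - 1) : ℝ) : ℂ) ∨
        ω = -((1 : ℂ) / ((Real.sqrt (a ^ 2 - 1) : ℝ) : ℂ))) ∧
      (∀ ω : ℂ, 1 + ((1 - a ^ 2 : ℝ) : ℂ) * ω ^ 2 = 0 →
        1 < ‖ω‖ ∧
        ((ω + ω⁻¹) / 2 = ((a ^ 2 / (2 * Real.sqrt (a ^ 2 - 1)) : ℝ) : ℂ) ∨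
          (ω + ω⁻¹) / 2 = -((a ^ 2 / (2 * Real.sqrt (a ^ 2 - 1)) : ℝ) : ℂ)))) ∧
    (Real.sqrt 2 < a →
      ∀ ω : ℂ, 1 + ((1 - a ^ 2 : ℝ) : ℂ) * ω ^ 2 = 0 → ‖ω‖ < 1) := by
  refine ⟨fun ha1 => ?_, fun ha1 ha2 => ?_, fun ha2 ω hω => ?_⟩
  · have hpos : 0 < 1 - a ^ 2 := by nlinarith
    have hs : (Real.sqrt (1 - a ^ 2) : ℂ) ^ 2 = ((1 - a ^ 2 : ℝ) : ℂ) := by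
      rw [← Complex.ofReal_pow, Real.sq_sqrt hpos.le]
    have hs0 : (Real.sqrt (1 - a ^ 2) : ℂ) ≠ 0 := by exact_mod_cast (Real.sqrt_pos.2 hpos).ne'
    have hc0 : ((1 - a ^ 2 : ℝ) : ℂ) ≠ 0 := by exact_mod_cast hpos.ne'
    refine roots_of_one_add_mul_sq_of_norm_lt_one ?_ (norm_one_sub_sq_lt_one ha (by nlinarith)) ?_
    · rw [div_pow, Complex.I_sq, hs]; field_simp
    · push_cast at hs ⊢; field_simp; linear_combination hs + (1 - a ^ 2 : ℂ) * Complex.I_sq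
  · have hpos : 0 < a ^ 2 - 1 := by nlinarith
    have ht : (Real.sqrt (a ^ 2 - 1) : ℂ) ^ 2 = ((a ^ 2 - 1 : ℝ) : ℂ) := by
      rw [← Complex.ofReal_pow, Real.sq_sqrt hpos.le]
    have ht0 : (Real.sqrt (a ^ 2 - 1) : ℂ) ≠ 0 := by exact_mod_cast (Real.sqrt_pos.2 hpos).ne'
    have hc0 : ((a ^ 2 - 1 : ℝ) : ℂ) ≠ 0 := by exact_mod_cast hpos.ne'
    have ha2' : a ^ 2 < 2 := (Real.lt_sqrt ha.le).1 ha2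
    refine roots_of_one_add_mul_sq_of_norm_lt_one ?_ (norm_one_sub_sq_lt_one ha ha2') ?_
    · rw [div_pow, one_pow, ht, show (1 - a ^ 2 : ℝ) = -(a ^ 2 - 1) by ring, Complex.ofReal_neg]
      field_simp
    · push_cast at ht ⊢; field_simp; linear_combination ht
  · have ha2' : 2 < a ^ 2 := (Real.sqrt_lt' ha).1 ha2
    refine norm_lt_one_of_mul_sq_eq_neg_one (c := ((1 - a ^ 2 : ℝ) : ℂ)) (by linear_combination hω) ?_
    rw [Complex.norm_real, Real.norm_eq_abs, abs_of_neg (by linarith)]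
    linarith

/-- Resonances and eigenvalues of `H_a`: the complex solutions `ω` of
`1 + (1 − a²)ω² = 0`. For `a ∈ (0,1)` they are `±i/√(1 − a²)`, have
`|ω| > 1`, and correspond to `z = (ω + ω⁻¹)/2 = ±i·a²/(2√(1 − a²))`; for
`a ∈ (1,√2)` they are `±1/√(a² − 1)`, have `|ω| > 1`, and correspond to
`z = ±a²/(2√(a² − 1))`; for `a > √2` every solution satisfies `|ω| < 1`. -/
theorem stmt17 (a : ℝ) (ha : 0 < a) (hne : a ≠ 1) :
    (a < 1 →
      (∀ ω : ℂ, 1 + ((1 - a ^ 2 : ℝ) : ℂ) * ω ^ 2 = 0 ↔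
        ω = Complex.I / ((Real.sqrt (1 - a ^ 2) : ℝ) : ℂ) ∨
        ω = -(Complex.I / ((Real.sqrt (1 - a ^ 2) : ℝ) : ℂ))) ∧
      (∀ ω : ℂ, 1 + ((1 - a ^ 2 : ℝ) : ℂ) * ω ^ 2 = 0 →
        1 < ‖ω‖ ∧
        ((ω + ω⁻¹) / 2 =
            Complex.I * ((a ^ 2 : ℝ) : ℂ) / (2 * ((Real.sqrt (1 - a ^ 2) : ℝ) : ℂ)) ∨
          (ω + ω⁻¹) / 2 =
            -(Complex.I * ((a ^ 2 : ℝ) : ℂ) / (2 * ((Real.sqrt (1 - a ^ 2) : ℝ) : ℂ)))))) ∧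
    (1 < a → a < Real.sqrt 2 →
      (∀ ω : ℂ, 1 + ((1 - a ^ 2 : ℝ) : ℂ) * ω ^ 2 = 0 ↔
        ω = (1 : ℂ) / ((Real.sqrt (a ^ 2 - 1) : ℝ) : ℂ) ∨
        ω = -((1 : ℂ) / ((Real.sqrt (a ^ 2 - 1) : ℝ) : ℂ))) ∧
      (∀ ω : ℂ, 1 + ((1 - a ^ 2 : ℝ) : ℂ) * ω ^ 2 = 0 →
        1 < ‖ω‖ ∧
        ((ω + ω⁻¹) / 2 = ((a ^ 2 / (2 * Real.sqrt (a ^ 2 - 1)) : ℝ) : ℂ) ∨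
          (ω + ω⁻¹) / 2 = -((a ^ 2 / (2 * Real.sqrt (a ^ 2 - 1)) : ℝ) : ℂ)))) ∧
    (Real.sqrt 2 < a →
      ∀ ω : ℂ, 1 + ((1 - a ^ 2 : ℝ) : ℂ) * ω ^ 2 = 0 → ‖ω‖ < 1) :=
  stmt17_general a ha
end
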